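/- arXiv:1605.00058 — 7 statements merged into one kernel-verified Lean document; each statement's English description precedes it below -/
import Mathlib

section
/- Let k be an even positive integer, d ≥ 1 an integer, and n ≥ 1. For any order-k tensor A ∈ ℝ^{[n]^k} with natural flattening A_flat (an n^{k/2} × n^{k/2} matrix), the injective tensor norm satisfies ‖A‖_inj ≤ ( ‖ E_{Π,Σ∈Ŝ_{kd/2}}[ Π (A_flat)^{⊗d} Σ ] ‖ )^{1/d}. -/
open MeasureTheory Matrix

/-- The spectral (operator) norm of a square real matrix. -/
noncomputable def sNorm {ι : Type*} [Fintype ι] [DecidableEq ι] (M : Matrix ι ι ℝ) : ℝ :=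
  ‖Matrix.toEuclideanCLM (𝕜 := ℝ) M‖

/-- Average of `Π M Σ` over independent uniformly random permutation matrices `Π, Σ`
acting on the positions of tuple-indexed rows and columns. -/
noncomputable def symAvg {ι κ' : Type*} [Fintype ι] [DecidableEq ι] [Fintype κ']
    (M : Matrix (ι → κ') (ι → κ') ℝ) : Matrix (ι → κ') (ι → κ') ℝ :=
  fun I J => (∑ π : Equiv.Perm ι, ∑ σ : Equiv.Perm ι, M (I ∘ π) (J ∘ σ)) /
    ((Fintype.card (Equiv.Perm ι) : ℝ) ^ 2)

/-- Combine two `κ`-tuples into a `k = 2κ`-tuple (first `a`, then `b`). -/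
def joinIdx {n k κ : ℕ} (hk : k = 2 * κ) (a b : Fin κ → Fin n) : Fin k → Fin n :=
  fun i => if h : (i : ℕ) < κ then a ⟨i, h⟩ else b ⟨(i : ℕ) - κ, by have := i.isLt; omega⟩

/-- The natural flattening of an order-`2κ` tensor to an `n^κ × n^κ` matrix. -/
def flatten {n k κ : ℕ} (hk : k = 2 * κ) (A : (Fin k → Fin n) → ℝ) :
    Matrix (Fin κ → Fin n) (Fin κ → Fin n) ℝ :=
  fun a b => A (joinIdx hk a b)

/-- The `d`-fold Kronecker power of a matrix with rows and columns indexed by `κ`-tuples,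
with rows and columns reindexed by `(d·κ)`-tuples. -/
noncomputable def kronFlat {n κ : ℕ} (d : ℕ) (M : Matrix (Fin κ → Fin n) (Fin κ → Fin n) ℝ) :
    Matrix ((Fin d × Fin κ) → Fin n) ((Fin d × Fin κ) → Fin n) ℝ :=
  fun I J => ∏ t : Fin d, M (fun s => I (t, s)) (fun s => J (t, s))

/-- The injective tensor norm of an order-`k` tensor on `[n]`:
the supremum of `|⟨T, x^{⊗k}⟩|` over Euclidean unit vectors `x ∈ ℝ^n`. -/
noncomputable def injNorm {n k : ℕ} (T : (Fin k → Fin n) → ℝ) : ℝ :=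
  ⨆ x : {x : Fin n → ℝ // ∑ i, (x i) ^ 2 = 1},
    |∑ i : Fin k → Fin n, T i * ∏ j, x.1 (i j)|

/-!
For a unit vector `x`, the contraction `⟨A, x^{⊗k}⟩` is the quadratic form of the flattening
`A_flat` at `x^{⊗κ}`, so its `d`-th power is the quadratic form of `A_flat^{⊗d}` at
`x^{⊗dκ}`. That vector is fixed by every permutation of tuple positions, so the quadratic form
does not change when `A_flat^{⊗d}` is replaced by its permutation average, and a quadratic form
at a unit vector is bounded by the spectral norm.
-/

section TensorPow

variable {ι α R : Type*} [CommSemiring R]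

/-- The rank-one tensor `x^{⊗ι}`. -/
def tensorPow [Fintype ι] (x : α → R) (I : ι → α) : R :=
  ∏ i, x (I i)

theorem tensorPow_comp_perm [Fintype ι] (x : α → R) (π : Equiv.Perm ι) (I : ι → α) :
    tensorPow x (I ∘ π) = tensorPow x I :=
  Equiv.prod_comp π fun i => x (I i)

theorem tensorPow_prod_type {ι' : Type*} [Fintype ι] [Fintype ι'] (x : α → R) (I : ι × ι' → α) :
    tensorPow x I = ∏ t, tensorPow x fun s => I (t, s) :=
  Fintype.prod_prod_type _

theorem sum_sq_tensorPow [Fintype ι] [DecidableEq ι] [Fintype α] (x : α → R) :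
    ∑ I : ι → α, tensorPow x I ^ 2 = (∑ a, x a ^ 2) ^ Fintype.card ι := by
  simp only [tensorPow, ← Finset.prod_pow]
  rw [← Finset.card_univ, ← Finset.prod_const, Fintype.prod_sum]

end TensorPow

theorem dotProduct_mulVec_eq_sum {m R : Type*} [Fintype m] [CommSemiring R] (M : Matrix m m R)
    (u v : m → R) : u ⬝ᵥ M *ᵥ v = ∑ i, ∑ j, u i * M i j * v j := by
  simp only [dotProduct, mulVec, Finset.mul_sum, mul_assoc]

section JoinIdx

variable {n k κ : ℕ} (hk : k = 2 * κ)

theorem joinIdx_comp_cast (h : κ + κ = k) (a b : Fin κ → Fin n) :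
    joinIdx hk a b ∘ Fin.cast h = Fin.append a b := by
  funext i
  refine Fin.addCases (fun i => ?_) (fun i => ?_) i
  · simp only [Function.comp_apply, Fin.append_left, joinIdx]
    simp
  · simp only [Function.comp_apply, Fin.append_right, joinIdx]
    simp

theorem sum_joinIdx {M : Type*} [AddCommMonoid M] (f : (Fin k → Fin n) → M) :
    ∑ a, ∑ b, f (joinIdx hk a b) = ∑ i, f i := by
  have h : κ + κ = k := by omega
  rw [← Fintype.sum_prod_type',
    ← ((Fin.appendEquiv κ κ).trans ((finCongr h).arrowCongr (.refl _))).sum_comp]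
  congr! with p
  change _ = Fin.append p.1 p.2 ∘ Fin.cast h.symm
  rw [← joinIdx_comp_cast hk h]
  rfl

theorem tensorPow_joinIdx {R : Type*} [CommSemiring R] (x : Fin n → R) (a b : Fin κ → Fin n) :
    tensorPow x (joinIdx hk a b) = tensorPow x a * tensorPow x b := by
  have h : κ + κ = k := by omega
  rw [tensorPow, ← Fin.prod_congr' _ h, Fin.prod_univ_add]
  simp only [← Function.comp_apply (f := joinIdx hk a b), joinIdx_comp_cast, Fin.append_left,
    Fin.append_right, tensorPow]

theorem sum_mul_tensorPow_eq_flatten (A : (Fin k → Fin n) → ℝ) (x : Fin n → ℝ) :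
    ∑ i, A i * tensorPow x i = tensorPow x ⬝ᵥ flatten hk A *ᵥ tensorPow x := by
  rw [dotProduct_mulVec_eq_sum, ← sum_joinIdx hk]
  simp only [tensorPow_joinIdx, flatten]
  exact Finset.sum_congr rfl fun a _ => Finset.sum_congr rfl fun b _ => by ring

end JoinIdx

theorem abs_dotProduct_mulVec_le_sNorm {ι : Type*} [Fintype ι] [DecidableEq ι] (M : Matrix ι ι ℝ)
    (u : ι → ℝ) (hu : ∑ i, u i ^ 2 = 1) : |u ⬝ᵥ M *ᵥ u| ≤ sNorm M := by
  have hnorm : ‖WithLp.toLp 2 u‖ = 1 := by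
    simp only [EuclideanSpace.norm_eq, Real.norm_eq_abs, sq_abs, hu, Real.sqrt_one]
  have hinner : u ⬝ᵥ M *ᵥ u =
      inner ℝ (WithLp.toLp 2 u) (toEuclideanCLM (𝕜 := ℝ) M (WithLp.toLp 2 u)) := by
    rw [toEuclideanCLM_toLp, EuclideanSpace.inner_eq_star_dotProduct, dotProduct_comm]
    rfl
  calc |u ⬝ᵥ M *ᵥ u| ≤ ‖WithLp.toLp 2 u‖ * ‖toEuclideanCLM (𝕜 := ℝ) M (WithLp.toLp 2 u)‖ :=
        hinner ▸ abs_real_inner_le_norm _ _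
    _ ≤ ‖WithLp.toLp 2 u‖ * (sNorm M * ‖WithLp.toLp 2 u‖) := by
        gcongr; exact ContinuousLinearMap.le_opNorm _ _
    _ = sNorm M := by rw [hnorm]; ring

section SymAvg

variable {ι κ' : Type*} [Fintype ι] [DecidableEq ι] [Fintype κ']

theorem dotProduct_mulVec_submatrix_equiv {m R : Type*} [Fintype m] [CommSemiring R]
    (K : Matrix m m R) (u : m → R) (e₁ e₂ : m ≃ m) (h₁ : u ∘ e₁ = u) (h₂ : u ∘ e₂ = u) :
    u ⬝ᵥ K.submatrix e₁ e₂ *ᵥ u = u ⬝ᵥ K *ᵥ u := by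
  have h₂' : u ∘ e₂.symm = u := (e₂.comp_symm_eq u u).mpr h₂.symm
  rw [submatrix_mulVec_equiv, h₂']
  nth_rewrite 1 [← h₁]
  exact comp_equiv_dotProduct_comp_equiv _ _ _

theorem symAvg_eq_smul_sum (K : Matrix (ι → κ') (ι → κ') ℝ) :
    symAvg K = ((Fintype.card (Equiv.Perm ι) : ℝ) ^ 2)⁻¹ •
      ∑ π : Equiv.Perm ι, ∑ σ : Equiv.Perm ι,
        K.submatrix (π.symm.arrowCongr (.refl κ')) (σ.symm.arrowCongr (.refl κ')) := by
  ext I J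
  -- `π.symm.arrowCongr (.refl κ')` is `(· ∘ π)` by definition
  simp only [symAvg, Matrix.smul_apply, Matrix.sum_apply, submatrix_apply, smul_eq_mul,
    div_eq_inv_mul]
  rfl

theorem dotProduct_mulVec_symAvg (K : Matrix (ι → κ') (ι → κ') ℝ) (u : (ι → κ') → ℝ)
    (hu : ∀ (π : Equiv.Perm ι) (I : ι → κ'), u (I ∘ π) = u I) :
    u ⬝ᵥ symAvg K *ᵥ u = u ⬝ᵥ K *ᵥ u := by
  have hπ (π : Equiv.Perm ι) : u ∘ π.symm.arrowCongr (.refl κ') = u := funext (hu π)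
  simp only [symAvg_eq_smul_sum, smul_mulVec, dotProduct_smul, sum_mulVec, dotProduct_sum,
    dotProduct_mulVec_submatrix_equiv _ _ _ _ (hπ _) (hπ _), Finset.sum_const, Finset.card_univ,
    smul_eq_mul, nsmul_eq_mul]
  have : (Fintype.card (Equiv.Perm ι) : ℝ) ≠ 0 := by positivity
  field_simp

end SymAvg

theorem dotProduct_mulVec_kronFlat {n κ : ℕ} (d : ℕ)
    (M : Matrix (Fin κ → Fin n) (Fin κ → Fin n) ℝ) (v : (Fin κ → Fin n) → ℝ) :
    (v ⬝ᵥ M *ᵥ v) ^ d = (fun I => ∏ t, v fun s => I (t, s)) ⬝ᵥ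
      kronFlat d M *ᵥ (fun I => ∏ t, v fun s => I (t, s)) := by
  calc (v ⬝ᵥ M *ᵥ v) ^ d = ∏ _t : Fin d, ∑ a, ∑ b, v a * M a b * v b := by
        rw [dotProduct_mulVec_eq_sum, Finset.prod_const, Finset.card_univ, Fintype.card_fin]
    _ = ∑ A : Fin d → Fin κ → Fin n, ∑ B : Fin d → Fin κ → Fin n,
          ∏ t, v (A t) * M (A t) (B t) * v (B t) := by
        simp_rw [Fintype.prod_sum]
    _ = _ := by
        rw [dotProduct_mulVec_eq_sum, ← (Equiv.curry _ _ _).symm.sum_comp]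
        refine Finset.sum_congr rfl fun A _ => ?_
        rw [← (Equiv.curry _ _ _).symm.sum_comp]
        simp only [Finset.prod_mul_distrib, kronFlat]
        rfl

theorem injNorm_le_symAvg_kronPow_general
    (n k κ d : ℕ) (hk : k = 2 * κ) (hd : 1 ≤ d)
    (A : (Fin k → Fin n) → ℝ) :
    injNorm A ≤ (sNorm (symAvg (kronFlat d (flatten hk A)))) ^ (1 / (d : ℝ)) := by
  -- `Real.iSup_le` also covers `n = 0`, where there is no unit vector and `⨆` is `0`
  refine Real.iSup_le (fun ⟨x, hx⟩ => ?_) (by unfold sNorm; positivity)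
  have hpow : (∑ i, A i * tensorPow x i) ^ d =
      tensorPow x ⬝ᵥ symAvg (kronFlat d (flatten hk A)) *ᵥ tensorPow x := by
    rw [sum_mul_tensorPow_eq_flatten hk, dotProduct_mulVec_kronFlat,
      dotProduct_mulVec_symAvg _ _ (tensorPow_comp_perm x)]
    simp only [← tensorPow_prod_type]
  have hunit : ∑ I : Fin d × Fin κ → Fin n, tensorPow x I ^ 2 = 1 := by
    rw [sum_sq_tensorPow, hx, one_pow]
  rw [one_div, Real.le_rpow_inv_iff_of_pos (abs_nonneg _) (by unfold sNorm; positivity)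
    (Nat.cast_pos.mpr hd), Real.rpow_natCast, ← abs_pow]
  exact hpow ▸ abs_dotProduct_mulVec_le_sNorm _ _ hunit

/-- For an even-order tensor `A`, the injective tensor norm is at most the `d`-th root of the
spectral norm of the permutation-averaged `d`-th Kronecker power of the natural flattening. -/
theorem injNorm_le_symAvg_kronPow
    (n k κ d : ℕ) (hk : k = 2 * κ) (hκ : 1 ≤ κ) (hd : 1 ≤ d) (hn : 1 ≤ n)
    (A : (Fin k → Fin n) → ℝ) :
    injNorm A ≤ (sNorm (symAvg (kronFlat d (flatten hk A)))) ^ (1 / (d : ℝ)) :=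
  injNorm_le_symAvg_kronPow_general n k κ d hk hd A
end

section
/- Let n, d, k, ℓ be positive integers with d·k even and 2·d·k·ℓ·log n ≤ n. Let B be an n × n random matrix with i.i.d. Rademacher (uniform ±1) entries, and let C' = E_{Π,Σ∈Ŝ_{dk/2}}[ Π B^{⊗dk/2} Σ ]. Then E[ Tr((C' C'ᵀ)^ℓ) ] ≤ 2^{4dkℓ+1} · n^{dkℓ/2 + dk/2}. -/
open MeasureTheory ProbabilityTheory Matrix

/-- The `m`-fold Kronecker power of an `n × n` matrix, with rows and columns indexed by
`m`-tuples of the original indices. -/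
noncomputable def kronPow {n : ℕ} (m : ℕ) (B : Matrix (Fin n) (Fin n) ℝ) :
    Matrix ((Fin m) → Fin n) ((Fin m) → Fin n) ℝ :=
  fun I J => ∏ t : Fin m, B (I t) (J t)

/-!
The trace of `(C Cᵀ) ^ L` is at most its dimension `n ^ m` times its L2 operator norm, and
averaging over permutations and taking Kronecker powers do not increase operator norms, so the
trace is at most `n ^ m * ‖B‖ ^ (2 m L)`. The norm of `B` is controlled by the bilinear forms
`xᵀ B y` over a `1/4`-net of the unit ball, which has at most `9 ^ n` points by a volume argument.
Each such form is a Rademacher sum with unit variance, hence exceeds `8 √n` with probability at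
most `exp (-32 n)` by Hoeffding's inequality. Off this rare event `‖B‖ ≤ 16 √n`, and on it the
crude bound `‖B‖ ≤ n` suffices because `n ^ (m L) ≤ exp (n / 4)` under the hypothesis on `log n`.
-/

open Metric Module
open scoped Matrix.Norms.L2Operator Kronecker NNReal ENNReal RealInnerProductSpace

namespace Matrix

variable {α β γ δ : Type*} [Fintype α] [Fintype β] [Fintype γ] [Fintype δ]

section

variable [DecidableEq β]

lemma sum_sq_mulVec_le_l2_opNorm_sq (A : Matrix α β ℝ) (x : β → ℝ) :
    ∑ i, (A *ᵥ x) i ^ 2 ≤ ‖A‖ ^ 2 * ∑ j, x j ^ 2 := by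
  have h := pow_le_pow_left₀ (norm_nonneg _) (l2_opNorm_mulVec A (WithLp.toLp 2 x)) 2
  rwa [mul_pow, EuclideanSpace.real_norm_sq_eq, EuclideanSpace.real_norm_sq_eq] at h

lemma l2_opNorm_le_of_sum_sq_mulVec_le (A : Matrix α β ℝ) {c : ℝ} (hc : 0 ≤ c)
    (h : ∀ x : β → ℝ, ∑ i, (A *ᵥ x) i ^ 2 ≤ c ^ 2 * ∑ j, x j ^ 2) : ‖A‖ ≤ c := by
  rw [l2_opNorm_def]
  refine ContinuousLinearMap.opNorm_le_bound _ hc fun v => ?_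
  refine pow_le_pow_iff_left₀ (norm_nonneg _) (by positivity) two_ne_zero |>.mp ?_
  rw [mul_pow, EuclideanSpace.real_norm_sq_eq, EuclideanSpace.real_norm_sq_eq]
  exact h v.ofLp

lemma abs_apply_le_l2_opNorm (A : Matrix α β ℝ) (i : α) (j : β) : |A i j| ≤ ‖A‖ := by
  classical
  have hcol := sum_sq_mulVec_le_l2_opNorm_sq A (Pi.single j 1)
  simp only [mulVec_single_one, Pi.single_apply, ite_pow, one_pow, zero_pow two_ne_zero,
    Finset.sum_ite_eq', Finset.mem_univ, if_true, mul_one] at hcol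
  refine (pow_le_pow_iff_left₀ (abs_nonneg _) (norm_nonneg _) two_ne_zero).mp ?_
  rw [sq_abs]
  exact (Finset.single_le_sum (fun i _ => sq_nonneg (A i j)) (Finset.mem_univ i)).trans hcol

end

lemma abs_trace_le_card_mul_l2_opNorm [DecidableEq α] (A : Matrix α α ℝ) :
    |A.trace| ≤ Fintype.card α * ‖A‖ :=
  calc |A.trace| ≤ ∑ i, |A i i| := Finset.abs_sum_le_sum_abs _ _
    _ ≤ ∑ _i : α, ‖A‖ := Finset.sum_le_sum fun i _ => abs_apply_le_l2_opNorm A i i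
    _ = Fintype.card α * ‖A‖ := by simp

lemma l2_opNorm_transpose [DecidableEq α] [DecidableEq β] (A : Matrix α β ℝ) : ‖Aᵀ‖ = ‖A‖ :=
  l2_opNorm_conjTranspose A

lemma l2_opNorm_one_le [DecidableEq α] : ‖(1 : Matrix α α ℝ)‖ ≤ 1 := by
  rw [cstar_norm_def, map_one]
  exact ContinuousLinearMap.norm_id_le

lemma l2_opNorm_pow_le [DecidableEq α] (A : Matrix α α ℝ) : ∀ k : ℕ, ‖A ^ k‖ ≤ ‖A‖ ^ k
  | 0 => by simpa using l2_opNorm_one_le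
  | k + 1 => norm_pow_le' A k.succ_pos

lemma l2_opNorm_submatrix_le [DecidableEq β] [DecidableEq δ] (A : Matrix γ δ ℝ) (e : α ≃ γ)
    (f : β ≃ δ) : ‖A.submatrix e f‖ ≤ ‖A‖ := by
  refine l2_opNorm_le_of_sum_sq_mulVec_le _ (norm_nonneg A) fun x => ?_
  have hmulVec : ∀ i, (A.submatrix e f *ᵥ x) i = (A *ᵥ (x ∘ f.symm)) (e i) := fun i => by
    simp only [mulVec, dotProduct, submatrix_apply]
    exact (f.symm.sum_comp _).symm.trans (by simp)
  simp only [hmulVec]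
  rw [e.sum_comp (fun k => (A *ᵥ (x ∘ f.symm)) k ^ 2), ← f.symm.sum_comp (fun j => x j ^ 2)]
  exact sum_sq_mulVec_le_l2_opNorm_sq A _

lemma l2_opNorm_kronecker_le [DecidableEq β] [DecidableEq δ] (A : Matrix α β ℝ)
    (C : Matrix γ δ ℝ) : ‖A ⊗ₖ C‖ ≤ ‖A‖ * ‖C‖ := by
  refine l2_opNorm_le_of_sum_sq_mulVec_le _ (by positivity) fun v => ?_
  have hmulVec : ∀ i k, (A ⊗ₖ C *ᵥ v) (i, k) = (A *ᵥ fun j => (C *ᵥ fun l => v (j, l)) k) i := by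
    intro i k
    simp only [mulVec, dotProduct, kroneckerMap_apply, Fintype.sum_prod_type, Finset.mul_sum,
      mul_assoc]
  calc ∑ p, (A ⊗ₖ C *ᵥ v) p ^ 2
      = ∑ k, ∑ i, (A *ᵥ fun j => (C *ᵥ fun l => v (j, l)) k) i ^ 2 := by
        rw [Fintype.sum_prod_type, Finset.sum_comm]
        simp only [hmulVec]
    _ ≤ ∑ k, ‖A‖ ^ 2 * ∑ j, (C *ᵥ fun l => v (j, l)) k ^ 2 :=
        Finset.sum_le_sum fun k _ => sum_sq_mulVec_le_l2_opNorm_sq A _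
    _ = ‖A‖ ^ 2 * ∑ j, ∑ k, (C *ᵥ fun l => v (j, l)) k ^ 2 := by
        rw [← Finset.mul_sum, Finset.sum_comm]
    _ ≤ ‖A‖ ^ 2 * ∑ j, ‖C‖ ^ 2 * ∑ l, v (j, l) ^ 2 := by
        gcongr with j
        exact sum_sq_mulVec_le_l2_opNorm_sq C _
    _ = (‖A‖ * ‖C‖) ^ 2 * ∑ p, v p ^ 2 := by
        rw [Fintype.sum_prod_type, ← Finset.mul_sum, mul_pow, mul_assoc]

lemma l2_opNorm_le_card_of_abs_le_one [DecidableEq α] (A : Matrix α α ℝ)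
    (h : ∀ i j, |A i j| ≤ 1) : ‖A‖ ≤ Fintype.card α := by
  refine l2_opNorm_le_of_sum_sq_mulVec_le _ (Nat.cast_nonneg _) fun x => ?_
  have hrow : ∀ i, (A *ᵥ x) i ^ 2 ≤ Fintype.card α * ∑ j, x j ^ 2 := fun i =>
    calc (A *ᵥ x) i ^ 2 ≤ (∑ j, A i j ^ 2) * ∑ j, x j ^ 2 :=
          Finset.sum_mul_sq_le_sq_mul_sq _ _ _
      _ ≤ (∑ _j : α, 1) * ∑ j, x j ^ 2 := by
          gcongr with j
          simpa using sq_le_one_iff_abs_le_one _ |>.mpr (h i j)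
      _ = Fintype.card α * ∑ j, x j ^ 2 := by simp
  calc ∑ i, (A *ᵥ x) i ^ 2 ≤ ∑ _i : α, Fintype.card α * ∑ j, x j ^ 2 :=
        Finset.sum_le_sum fun i _ => hrow i
    _ = (Fintype.card α : ℝ) ^ 2 * ∑ j, x j ^ 2 := by simp; ring

end Matrix

section Net

lemma ContinuousLinearMap.one_sub_two_mul_mul_opNorm_le_of_isCover {E F : Type*}
    [NormedAddCommGroup E] [InnerProductSpace ℝ E] [NormedAddCommGroup F] [InnerProductSpace ℝ F]
    (T : E →L[ℝ] F) {ε : ℝ≥0} {M : Set E} {N : Set F} (hM : IsCover ε (closedBall 0 1) M)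
    (hN : IsCover ε (closedBall 0 1) N) (hN_sub : N ⊆ closedBall 0 1) {t : ℝ}
    (h : ∀ x ∈ N, ∀ y ∈ M, ⟪x, T y⟫ ≤ t) : (1 - 2 * ε) * ‖T‖ ≤ t := by
  have hball : ∀ y : E, ‖y‖ ≤ 1 → ‖T y‖ ≤ t + 2 * ε * ‖T‖ := by
    intro y hy
    obtain ⟨y', hy'M, hyy'⟩ := hM (mem_closedBall_zero_iff.2 hy)
    set x : F := ‖T y‖⁻¹ • T y
    have hx : ‖x‖ ≤ 1 := by
      rw [norm_smul, norm_inv, norm_norm]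
      exact inv_mul_le_one
    obtain ⟨x', hx'N, hxx'⟩ := hN (mem_closedBall_zero_iff.2 hx)
    have hx'_norm : ‖x'‖ ≤ 1 := mem_closedBall_zero_iff.1 (hN_sub hx'N)
    have hxx'_norm : ‖x - x'‖ ≤ ε := by rwa [← dist_eq_norm, dist_le_coe, ← edist_le_coe]
    have hyy'_norm : ‖y - y'‖ ≤ ε := by rwa [← dist_eq_norm, dist_le_coe, ← edist_le_coe]
    have hTy : ‖T y‖ = ⟪x, T y⟫ := by
      rw [real_inner_smul_left, real_inner_self_eq_norm_sq, sq, ← mul_assoc, inv_mul_mul_self]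
    have hsplit : ⟪x, T y⟫ = ⟪x', T y'⟫ + ⟪x - x', T y⟫ + ⟪x', T (y - y')⟫ := by
      simp only [inner_sub_left, inner_sub_right, map_sub]
      ring
    have h₁ : ⟪x - x', T y⟫ ≤ ε * ‖T‖ :=
      calc ⟪x - x', T y⟫ ≤ ‖x - x'‖ * (‖T‖ * ‖y‖) :=
            (real_inner_le_norm _ _).trans (by gcongr; exact T.le_opNorm y)
        _ ≤ ε * (‖T‖ * 1) := by gcongr
        _ = ε * ‖T‖ := by ring
    have h₂ : ⟪x', T (y - y')⟫ ≤ ε * ‖T‖ :=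
      calc ⟪x', T (y - y')⟫ ≤ ‖x'‖ * (‖T‖ * ‖y - y'‖) :=
            (real_inner_le_norm _ _).trans (by gcongr; exact T.le_opNorm _)
        _ ≤ 1 * (‖T‖ * ε) := by gcongr
        _ = ε * ‖T‖ := by ring
    linarith [h x' hx'N y' hy'M]
  have hT : 0 ≤ t + 2 * ε * ‖T‖ := by simpa using hball 0 (by simp)
  have := T.opNorm_le_of_unit_norm hT fun y hy => hball y hy.le
  linarith

lemma Matrix.l2_opNorm_le_two_mul_of_isCover {α : Type*} [Fintype α] [DecidableEq α]
    (A : Matrix α α ℝ) {N : Set (EuclideanSpace ℝ α)} (hN : IsCover (1 / 4) (closedBall 0 1) N)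
    (hN_sub : N ⊆ closedBall 0 1) {t : ℝ} (h : ∀ x ∈ N, ∀ y ∈ N, x ⬝ᵥ A *ᵥ y ≤ t) :
    ‖A‖ ≤ 2 * t := by
  have key := (Matrix.toEuclideanCLM (𝕜 := ℝ) A).one_sub_two_mul_mul_opNorm_le_of_isCover hN hN
    hN_sub fun x hx y hy => by rw [Matrix.inner_toEuclideanCLM]; exact h x hx y hy
  rw [← Matrix.cstar_norm_def] at key
  norm_num at key
  linarith

end Net

section Volume

variable {E : Type*} [NormedAddCommGroup E] [NormedSpace ℝ E] [FiniteDimensional ℝ E]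

lemma Finset.card_mul_pow_le_of_isSeparated {S : Finset E} {x : E} {r : ℝ} {ε : ℝ≥0}
    (hr : 0 ≤ r) (hε : 0 < ε) (hS : ↑S ⊆ closedBall x r) (hsep : IsSeparated ε (S : Set E)) :
    (S.card : ℝ) * ε ^ finrank ℝ E ≤ (2 * r + ε) ^ finrank ℝ E := by
  borelize E
  set μ : Measure E := Measure.addHaar
  set V := μ (ball 0 1)
  have hε2 : (0 : ℝ) < ε / 2 := by positivity
  have hdisj : (S : Set E).PairwiseDisjoint fun s => ball s (ε / 2) := by
    intro a ha b hb hab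
    have h : (ε : ℝ≥0∞) < edist a b := hsep ha hb hab
    rw [edist_nndist, ENNReal.coe_lt_coe, ← NNReal.coe_lt_coe, coe_nndist] at h
    exact ball_disjoint_ball (by linarith)
  have hsub : ∀ s ∈ S, ball s (ε / 2) ⊆ ball x (r + ε / 2) := fun s hs =>
    ball_subset_ball' (by linarith [mem_closedBall.1 (hS hs)])
  have hvol : (S.card : ℝ≥0∞) * (ENNReal.ofReal ((ε / 2) ^ finrank ℝ E) * V)
      ≤ ENNReal.ofReal ((r + ε / 2) ^ finrank ℝ E) * V := by
    calc (S.card : ℝ≥0∞) * (ENNReal.ofReal ((ε / 2) ^ finrank ℝ E) * V)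
        = ∑ s ∈ S, μ (ball s (ε / 2)) := by simp [V, Measure.addHaar_ball_of_pos μ _ hε2]
      _ = μ (⋃ s ∈ S, ball s (ε / 2)) :=
        (measure_biUnion_finset hdisj fun _ _ => measurableSet_ball).symm
      _ ≤ μ (ball x (r + ε / 2)) := measure_mono (Set.iUnion₂_subset hsub)
      _ = _ := Measure.addHaar_ball_of_pos μ x (by positivity)
  have hV : V ≠ 0 := (measure_ball_pos μ 0 one_pos).ne'
  have hV' : V ≠ ⊤ := measure_ball_lt_top.ne
  rw [← mul_assoc, ENNReal.mul_le_mul_iff_left hV hV', ← ENNReal.ofReal_natCast,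
    ← ENNReal.ofReal_mul (Nat.cast_nonneg _), ENNReal.ofReal_le_ofReal_iff (by positivity)] at hvol
  calc (S.card : ℝ) * ε ^ finrank ℝ E = 2 ^ finrank ℝ E * (S.card * (ε / 2) ^ finrank ℝ E) := by
        rw [div_pow]; field_simp
    _ ≤ 2 ^ finrank ℝ E * (r + ε / 2) ^ finrank ℝ E := by gcongr
    _ = (2 * r + ε) ^ finrank ℝ E := by rw [← mul_pow]; ring

lemma encard_le_of_isSeparated_of_subset_closedBall {C : Set E} (hC : C ⊆ closedBall 0 1)
    (hsep : IsSeparated ((1 / 4 : ℝ≥0) : ℝ≥0∞) C) : C.encard ≤ (9 ^ finrank ℝ E : ℕ) := by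
  by_contra! hlt
  obtain ⟨t, htC, ht⟩ := Set.exists_subset_encard_eq (Order.add_one_le_of_lt hlt)
  have htfin : t.Finite := Set.finite_of_encard_eq_coe ht
  have hcard : htfin.toFinset.card = 9 ^ finrank ℝ E + 1 := by
    rw [← Set.ncard_eq_toFinset_card t htfin, Set.ncard_def, ht]; rfl
  have key := Finset.card_mul_pow_le_of_isSeparated (S := htfin.toFinset) (ε := 1 / 4)
    zero_le_one (by norm_num) (by simpa using htC.trans hC) (by simpa using hsep.subset htC)
  rw [hcard, show (2 * 1 + ((1 / 4 : ℝ≥0) : ℝ)) = 9 * (1 / 4 : ℝ≥0) by norm_num, mul_pow] at key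
  push_cast at key
  have : (0 : ℝ) < (1 / 4) ^ finrank ℝ E := by positivity
  linarith

lemma exists_finset_isCover_closedBall_card_le :
    ∃ N : Finset E, ↑N ⊆ closedBall (0 : E) 1 ∧ N.card ≤ 9 ^ finrank ℝ E ∧
      IsCover (1 / 4) (closedBall (0 : E) 1) N := by
  have hpack : packingNumber (1 / 4) (closedBall (0 : E) 1) ≤ (9 ^ finrank ℝ E : ℕ) :=
    iSup_le fun C => iSup_le fun hC => iSup_le fun hsep =>
      encard_le_of_isSeparated_of_subset_closedBall hC hsep
  have hne : packingNumber (1 / 4) (closedBall (0 : E) 1) ≠ ⊤ :=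
    ne_top_of_le_ne_top (by simp) hpack
  obtain ⟨hfin, hcard⟩ := Set.encard_le_coe_iff_finite_ncard_le.1
    ((encard_maximalSeparatedSet hne).trans_le hpack)
  refine ⟨hfin.toFinset, by simpa using maximalSeparatedSet_subset, ?_,
    by simpa using isCover_maximalSeparatedSet hne⟩
  rwa [← Set.ncard_eq_toFinset_card _ hfin]

end Volume

section SymAvgKronPow

variable {ι κ : Type*} [Fintype ι] [DecidableEq ι] [Fintype κ]

-- `π.symm.arrowCongr (Equiv.refl κ)` is the reindexing `I ↦ I ∘ π`.
lemma symAvg_eq_smul_sum_submatrix (M : Matrix (ι → κ) (ι → κ) ℝ) :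
    symAvg M = ((Fintype.card (Equiv.Perm ι) : ℝ) ^ 2)⁻¹ •
      ∑ π : Equiv.Perm ι, ∑ σ : Equiv.Perm ι,
        M.submatrix (π.symm.arrowCongr (Equiv.refl κ)) (σ.symm.arrowCongr (Equiv.refl κ)) := by
  ext I J
  simp only [symAvg, Matrix.smul_apply, Matrix.sum_apply, smul_eq_mul, div_eq_inv_mul]
  rfl

lemma l2_opNorm_symAvg_le [DecidableEq κ] (M : Matrix (ι → κ) (ι → κ) ℝ) : ‖symAvg M‖ ≤ ‖M‖ := by
  rw [symAvg_eq_smul_sum_submatrix, norm_smul, norm_inv, norm_pow, Real.norm_natCast,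
    inv_mul_le_iff₀ (by positivity)]
  calc _ ≤ ∑ _π : Equiv.Perm ι, ∑ _σ : Equiv.Perm ι, ‖M‖ :=
        (norm_sum_le _ _).trans <| Finset.sum_le_sum fun _ _ => (norm_sum_le _ _).trans <|
          Finset.sum_le_sum fun _ _ => Matrix.l2_opNorm_submatrix_le M _ _
    _ = _ := by simp [sq, mul_assoc]

variable {n : ℕ}

lemma kronPow_zero (B : Matrix (Fin n) (Fin n) ℝ) : kronPow 0 B = 1 := by
  ext I J
  simp [kronPow, Matrix.one_apply, Subsingleton.elim I J]

lemma kronPow_succ (m : ℕ) (B : Matrix (Fin n) (Fin n) ℝ) :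
    kronPow (m + 1) B = (B ⊗ₖ kronPow m B).submatrix (Fin.consEquiv fun _ => Fin n).symm
      (Fin.consEquiv fun _ => Fin n).symm := by
  ext I J
  simp [kronPow, Fin.prod_univ_succ, Fin.tail]

lemma l2_opNorm_kronPow_le (B : Matrix (Fin n) (Fin n) ℝ) : ∀ m, ‖kronPow m B‖ ≤ ‖B‖ ^ m
  | 0 => by simp [kronPow_zero]
  | m + 1 => by
    rw [kronPow_succ, pow_succ']
    exact (l2_opNorm_submatrix_le _ _ _).trans <| (l2_opNorm_kronecker_le _ _).trans <|
      mul_le_mul_of_nonneg_left (l2_opNorm_kronPow_le B m) (norm_nonneg B)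

lemma abs_trace_symAvg_kronPow_pow_le (A : Matrix (Fin n) (Fin n) ℝ) (m L : ℕ) :
    |((symAvg (kronPow m A) * (symAvg (kronPow m A))ᵀ) ^ L).trace|
      ≤ n ^ m * ‖A‖ ^ (2 * m * L) := by
  set C := symAvg (kronPow m A)
  have hC : ‖C‖ ≤ ‖A‖ ^ m := (l2_opNorm_symAvg_le _).trans (l2_opNorm_kronPow_le A m)
  calc |((C * Cᵀ) ^ L).trace| ≤ n ^ m * ‖(C * Cᵀ) ^ L‖ := by
        simpa using Matrix.abs_trace_le_card_mul_l2_opNorm ((C * Cᵀ) ^ L)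
    _ ≤ n ^ m * (‖C‖ * ‖C‖) ^ L := by
        gcongr
        refine (Matrix.l2_opNorm_pow_le _ L).trans (pow_le_pow_left₀ (norm_nonneg _) ?_ L)
        exact (Matrix.l2_opNorm_mul _ _).trans_eq (by rw [Matrix.l2_opNorm_transpose])
    _ ≤ n ^ m * (‖A‖ ^ m * ‖A‖ ^ m) ^ L := by gcongr
    _ = n ^ m * ‖A‖ ^ (2 * m * L) := by ring

lemma abs_trace_symAvg_kronPow_pow_le_of_isCover (A : Matrix (Fin n) (Fin n) ℝ) (m L : ℕ)
    {N : Set (EuclideanSpace ℝ (Fin n))} (hN : IsCover (1 / 4) (closedBall 0 1) N)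
    (hN_sub : N ⊆ closedBall 0 1) {t : ℝ} (h : ∀ x ∈ N, ∀ y ∈ N, x ⬝ᵥ A *ᵥ y ≤ t) :
    |((symAvg (kronPow m A) * (symAvg (kronPow m A))ᵀ) ^ L).trace|
      ≤ n ^ m * (2 * t) ^ (2 * m * L) :=
  (abs_trace_symAvg_kronPow_pow_le A m L).trans <| by
    gcongr
    exact Matrix.l2_opNorm_le_two_mul_of_isCover A hN hN_sub h

lemma abs_trace_symAvg_kronPow_pow_le_of_abs_le_one (A : Matrix (Fin n) (Fin n) ℝ)
    (m L : ℕ) (h : ∀ i j, |A i j| ≤ 1) :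
    |((symAvg (kronPow m A) * (symAvg (kronPow m A))ᵀ) ^ L).trace| ≤ n ^ m * n ^ (2 * m * L) :=
  (abs_trace_symAvg_kronPow_pow_le A m L).trans <| by
    gcongr
    simpa using Matrix.l2_opNorm_le_card_of_abs_le_one A h

end SymAvgKronPow

section Measurability

variable {n : ℕ}

lemma continuous_kronPow (m : ℕ) : Continuous (kronPow m : Matrix (Fin n) (Fin n) ℝ → _) :=
  continuous_pi fun _ => continuous_pi fun _ => by unfold kronPow; fun_prop

lemma continuous_symAvg {ι κ : Type*} [Fintype ι] [DecidableEq ι] [Fintype κ] :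
    Continuous (symAvg : Matrix (ι → κ) (ι → κ) ℝ → _) :=
  continuous_pi fun _ => continuous_pi fun _ => by unfold symAvg; fun_prop

lemma measurable_trace_symAvg_kronPow_pow {Ω : Type*} [MeasurableSpace Ω]
    {B : Ω → Matrix (Fin n) (Fin n) ℝ} (hB : ∀ i j, Measurable fun ω => B ω i j) (m L : ℕ) :
    Measurable fun ω => ((symAvg (kronPow m (B ω)) * (symAvg (kronPow m (B ω)))ᵀ) ^ L).trace := by
  have hC : Continuous fun A : Fin n → Fin n → ℝ =>
      ((symAvg (kronPow m A) * (symAvg (kronPow m A))ᵀ) ^ L).trace :=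
    have hS := continuous_symAvg.comp (continuous_kronPow (n := n) m)
    ((hS.matrix_mul hS.matrix_transpose).pow L).matrix_trace
  exact hC.measurable.comp (measurable_pi_lambda _ fun i => measurable_pi_lambda _ (hB i))

end Measurability

section Rademacher

variable {Ω : Type*} [MeasurableSpace Ω] {μ : Measure Ω}

def IsRademacher (X : Ω → ℝ) (μ : Measure Ω) : Prop :=
  μ {ω | X ω = 1} = 1 / 2 ∧ μ {ω | X ω = -1} = 1 / 2

namespace IsRademacher

variable [IsProbabilityMeasure μ] {X : Ω → ℝ}

lemma ae_eq_one_or_eq_neg_one (hX : Measurable X) (h : IsRademacher X μ) :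
    ∀ᵐ ω ∂μ, X ω = 1 ∨ X ω = -1 := by
  have hdisj : Disjoint {ω | X ω = 1} {ω | X ω = -1} :=
    Set.disjoint_left.2 fun ω (h1 : X ω = 1) (h2 : X ω = -1) => by norm_num [h1] at h2
  have hmeas : MeasurableSet {ω | X ω = -1} := hX (measurableSet_singleton _)
  have hunion : μ ({ω | X ω = 1} ∪ {ω | X ω = -1}) = 1 := by
    rw [measure_union hdisj hmeas, h.1, h.2, ENNReal.add_halves]
  exact ae_iff.2 <| (prob_compl_eq_zero_iff ((hX (measurableSet_singleton _)).union hmeas)).2 hunion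

lemma integral_eq_zero (hX : Measurable X) (h : IsRademacher X μ) : μ[X] = 0 := by
  have hmeas : MeasurableSet {ω | X ω = 1} := hX (measurableSet_singleton _)
  have hX_ae : X =ᵐ[μ] fun ω => 2 * {ω | X ω = 1}.indicator 1 ω - 1 := by
    filter_upwards [h.ae_eq_one_or_eq_neg_one hX] with ω hω
    rcases hω with hω | hω <;> norm_num [Set.indicator_apply, hω]
  rw [integral_congr_ae hX_ae, integral_sub ((integrable_indicator_iff hmeas).2
    (integrable_const 1).integrableOn |>.const_mul 2) (integrable_const 1), integral_const_mul,
    integral_indicator_one hmeas, measureReal_def, h.1]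
  norm_num

lemma hasSubgaussianMGF (hX : Measurable X) (h : IsRademacher X μ) :
    HasSubgaussianMGF X 1 μ := by
  have hIcc : ∀ᵐ ω ∂μ, X ω ∈ Set.Icc (-1) 1 := by
    filter_upwards [h.ae_eq_one_or_eq_neg_one hX] with ω hω
    rcases hω with hω | hω <;> norm_num [hω]
  convert hasSubgaussianMGF_of_mem_Icc_of_integral_eq_zero hX.aemeasurable hIcc
    (h.integral_eq_zero hX)
  norm_num

end IsRademacher

lemma ProbabilityTheory.HasSubgaussianMGF.mono {X : Ω → ℝ} {c c' : NNReal}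
    (h : HasSubgaussianMGF X c μ) (hc : c ≤ c') : HasSubgaussianMGF X c' μ :=
  ⟨h.integrable_exp_mul, fun t => (h.mgf_le t).trans <| Real.exp_le_exp.2 <| by gcongr⟩

end Rademacher

section RandomBilinearForm

variable {Ω : Type*} [MeasurableSpace Ω] {μ : Measure Ω} [IsProbabilityMeasure μ]
  {α β : Type*} [Fintype α] [Fintype β]

lemma measureReal_le_dotProduct_mulVec_le (B : Ω → Matrix α β ℝ)
    (hMeas : ∀ i j, Measurable fun ω => B ω i j)
    (hIndep : iIndepFun (fun (p : α × β) ω => B ω p.1 p.2) μ)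
    (hRademacher : ∀ i j, IsRademacher (fun ω => B ω i j) μ)
    {x : EuclideanSpace ℝ α} {y : EuclideanSpace ℝ β} (hx : ‖x‖ ≤ 1) (hy : ‖y‖ ≤ 1) {t : ℝ}
    (ht : 0 ≤ t) : μ.real {ω | t ≤ x ⬝ᵥ B ω *ᵥ y} ≤ Real.exp (-t ^ 2 / 2) := by
  set c : α × β → ℝ := fun p => x p.1 * y p.2
  have hsubG := fun p (_ : p ∈ (Finset.univ : Finset (α × β))) =>
    ((hRademacher p.1 p.2).hasSubgaussianMGF (hMeas p.1 p.2)).const_mul (c p)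
  have hc : ∑ p, c p ^ 2 ≤ 1 :=
    calc ∑ p, c p ^ 2 = (∑ i, x i ^ 2) * ∑ j, y j ^ 2 := by
          simp only [c, mul_pow, Finset.sum_mul_sum, Fintype.sum_prod_type]
      _ = ‖x‖ ^ 2 * ‖y‖ ^ 2 := by simp only [EuclideanSpace.real_norm_sq_eq]
      _ ≤ 1 := mul_le_one₀ (pow_le_one₀ (norm_nonneg x) hx) (by positivity)
          (pow_le_one₀ (norm_nonneg y) hy)
  have hsum := (HasSubgaussianMGF.sum_of_iIndepFun
    (hIndep.comp (fun p r => c p * r) fun p => measurable_id.const_mul (c p)) hsubG).mono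
    (c' := 1) <| by
      rw [← NNReal.coe_le_coe, NNReal.coe_sum, NNReal.coe_one]
      change ∑ p, c p ^ 2 * 1 ≤ (1 : ℝ)
      simpa using hc
  have hbil : ∀ ω, x ⬝ᵥ B ω *ᵥ y = ∑ p, c p * B ω p.1 p.2 := fun ω => by
    simp only [dotProduct, Matrix.mulVec, Finset.mul_sum, Fintype.sum_prod_type, c]
    exact Finset.sum_congr rfl fun i _ => Finset.sum_congr rfl fun j _ => by ring
  simpa [hbil] using hsum.measure_ge_le ht

lemma measureReal_biUnion_le_dotProduct_mulVec_le (B : Ω → Matrix α β ℝ)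
    (hMeas : ∀ i j, Measurable fun ω => B ω i j)
    (hIndep : iIndepFun (fun (p : α × β) ω => B ω p.1 p.2) μ)
    (hRademacher : ∀ i j, IsRademacher (fun ω => B ω i j) μ)
    {N : Finset (EuclideanSpace ℝ α)} {M : Finset (EuclideanSpace ℝ β)}
    (hN : ↑N ⊆ closedBall (0 : EuclideanSpace ℝ α) 1)
    (hM : ↑M ⊆ closedBall (0 : EuclideanSpace ℝ β) 1)
    {t : ℝ} (ht : 0 ≤ t) :
    μ.real (⋃ x ∈ N, ⋃ y ∈ M, {ω | t ≤ x ⬝ᵥ B ω *ᵥ y}) ≤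
      N.card * M.card * Real.exp (-t ^ 2 / 2) :=
  calc μ.real (⋃ x ∈ N, ⋃ y ∈ M, {ω | t ≤ x ⬝ᵥ B ω *ᵥ y})
      ≤ ∑ x ∈ N, ∑ y ∈ M, μ.real {ω | t ≤ x ⬝ᵥ B ω *ᵥ y} :=
        (measureReal_biUnion_finset_le _ _).trans <|
          Finset.sum_le_sum fun x _ => measureReal_biUnion_finset_le _ _
    _ ≤ ∑ _x ∈ N, ∑ _y ∈ M, Real.exp (-t ^ 2 / 2) :=
        Finset.sum_le_sum fun x hx => Finset.sum_le_sum fun y hy =>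
          measureReal_le_dotProduct_mulVec_le B hMeas hIndep hRademacher
            (mem_closedBall_zero_iff.1 (hN hx)) (mem_closedBall_zero_iff.1 (hM hy)) ht
    _ = N.card * M.card * Real.exp (-t ^ 2 / 2) := by simp [mul_assoc]

end RandomBilinearForm

lemma integral_le_add_mul_measureReal_of_ae_le {Ω : Type*} [MeasurableSpace Ω] {μ : Measure Ω}
    [IsProbabilityMeasure μ] {f : Ω → ℝ} (hf : Integrable f μ) {S : Set Ω} (hS : MeasurableSet S)
    {a b : ℝ} (ha : 0 ≤ a) (hfa : ∀ᵐ ω ∂μ, ω ∉ S → f ω ≤ a) (hfb : ∀ᵐ ω ∂μ, f ω ≤ b) :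
    ∫ ω, f ω ∂μ ≤ a + b * μ.real S :=
  calc ∫ ω, f ω ∂μ ≤ ∫ ω, a + S.indicator (fun _ => b) ω ∂μ := by
        refine integral_mono_ae hf ((integrable_const a).add ((integrable_const b).indicator hS)) ?_
        filter_upwards [hfa, hfb] with ω hωa hωb
        by_cases hω : ω ∈ S
        · simp only [Set.indicator_of_mem hω]
          linarith
        · simpa [hω] using hωa hω
    _ = a + b * μ.real S := by
        rw [integral_add (integrable_const a) ((integrable_const b).indicator hS),
          integral_indicator_const b hS]
        simp [mul_comm]

lemma pow_le_exp_of_mul_log_le {x y : ℝ} (hx : 0 ≤ x) {k : ℕ} (h : k * Real.log x ≤ y) :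
    x ^ k ≤ Real.exp y := by
  rcases hx.eq_or_lt with rfl | hx
  · rcases k.eq_zero_or_pos with rfl | hk
    · simpa using h
    · simpa [zero_pow hk.ne'] using (Real.exp_pos y).le
  · rw [← Real.exp_log (pow_pos hx k), Real.log_pow]
    exact Real.exp_le_exp.2 h

lemma pow_mul_exp_le_one {n k : ℕ} (h : 4 * k * Real.log n ≤ n) :
    (n : ℝ) ^ k * ((9 : ℝ) ^ n * 9 ^ n * Real.exp (-(8 * √n) ^ 2 / 2)) ≤ 1 := by
  have hk : (n : ℝ) ^ k ≤ Real.exp (n / 4) := pow_le_exp_of_mul_log_le n.cast_nonneg (by linarith)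
  have h9 : (9 : ℝ) ^ n ≤ Real.exp (9 * n) := by
    rw [mul_comm, Real.exp_nat_mul]
    exact pow_le_pow_left₀ (by norm_num) (by linarith [Real.add_one_le_exp 9]) n
  rw [mul_pow, Real.sq_sqrt n.cast_nonneg]
  calc (n : ℝ) ^ k * ((9 : ℝ) ^ n * 9 ^ n * Real.exp (-(8 ^ 2 * n) / 2))
      ≤ Real.exp (n / 4) * (Real.exp (9 * n) * Real.exp (9 * n) * Real.exp (-(8 ^ 2 * n) / 2)) :=
        by gcongr
    _ = Real.exp (-(55 / 4 * n)) := by simp only [← Real.exp_add]; ring_nf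
    _ ≤ 1 := Real.exp_le_one_iff.2 (by linarith [n.cast_nonneg (α := ℝ)])

section ExpectedTrace

variable {Ω : Type*} [MeasurableSpace Ω] {μ : Measure Ω} [IsProbabilityMeasure μ] {n : ℕ}

lemma integral_trace_symAvg_kronPow_pow_le (B : Ω → Matrix (Fin n) (Fin n) ℝ)
    (hMeas : ∀ i j, Measurable fun ω => B ω i j)
    (hRademacher : ∀ i j, IsRademacher (fun ω => B ω i j) μ) (m L : ℕ)
    {N : Finset (EuclideanSpace ℝ (Fin n))}
    (hN : IsCover (1 / 4) (closedBall 0 1) (N : Set (EuclideanSpace ℝ (Fin n))))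
    (hN_sub : ↑N ⊆ closedBall (0 : EuclideanSpace ℝ (Fin n)) 1) (t : ℝ) :
    ∫ ω, ((symAvg (kronPow m (B ω)) * (symAvg (kronPow m (B ω)))ᵀ) ^ L).trace ∂μ
      ≤ n ^ m * (2 * t) ^ (2 * m * L)
        + n ^ m * n ^ (2 * m * L) * μ.real (⋃ x ∈ N, ⋃ y ∈ N, {ω | t ≤ x ⬝ᵥ B ω *ᵥ y}) := by
  have h_entries : ∀ᵐ ω ∂μ, ∀ i j, |B ω i j| ≤ 1 := by
    simp only [ae_all_iff]
    intro i j
    filter_upwards [(hRademacher i j).ae_eq_one_or_eq_neg_one (hMeas i j)] with ω hω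
    rcases hω with hω | hω <;> norm_num [hω]
  have h_bad := h_entries.mono fun ω hω => abs_trace_symAvg_kronPow_pow_le_of_abs_le_one _ m L hω
  have h_good : ∀ ω ∉ ⋃ x ∈ N, ⋃ y ∈ N, {ω | t ≤ x ⬝ᵥ B ω *ᵥ y},
      ((symAvg (kronPow m (B ω)) * (symAvg (kronPow m (B ω)))ᵀ) ^ L).trace
        ≤ n ^ m * (2 * t) ^ (2 * m * L) := fun ω hω => (le_abs_self _).trans <|
    abs_trace_symAvg_kronPow_pow_le_of_isCover _ m L hN hN_sub fun x hx y hy => by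
      simp only [Set.mem_iUnion, Set.mem_ofPred_eq, not_exists, not_le] at hω
      exact (hω x hx y hy).le
  refine integral_le_add_mul_measureReal_of_ae_le
    (.of_bound (measurable_trace_symAvg_kronPow_pow hMeas m L).aestronglyMeasurable _ h_bad)
    (Finset.measurableSet_biUnion _ fun x _ => Finset.measurableSet_biUnion _ fun y _ =>
      measurableSet_le measurable_const (by simp only [dotProduct, Matrix.mulVec]; fun_prop))
    (by rw [mul_assoc 2 m L, pow_mul]; positivity) (ae_of_all _ h_good)
    (h_bad.mono fun ω hω => (le_abs_self _).trans hω)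

end ExpectedTrace

theorem expected_trace_symAvg_kronPow_rademacher_general
    (n d k L m : ℕ)
    (hm : d * k = 2 * m)
    (hcond : (2 * d * k * L : ℝ) * Real.log n ≤ (n : ℝ))
    {Ω : Type*} [MeasurableSpace Ω] (μ : Measure Ω) [IsProbabilityMeasure μ]
    (B : Ω → Matrix (Fin n) (Fin n) ℝ)
    (hMeas : ∀ i j, Measurable fun ω => B ω i j)
    (hIndep : iIndepFun
      (fun (p : Fin n × Fin n) ω => B ω p.1 p.2) μ)
    (hRademacher : ∀ i j, μ {ω | B ω i j = 1} = 1/2 ∧ μ {ω | B ω i j = -1} = 1/2) :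
    ∫ ω, ((symAvg (kronPow m (B ω)) * (symAvg (kronPow m (B ω)))ᵀ) ^ L).trace ∂μ
      ≤ 2 ^ (4 * d * k * L + 1) * (n : ℝ) ^ (m * L + m) := by
  obtain ⟨N, hN_sub, hN_card, hN⟩ :=
    exists_finset_isCover_closedBall_card_le (E := EuclideanSpace ℝ (Fin n))
  rw [finrank_euclideanSpace_fin] at hN_card
  have hdkL : d * k * L = 2 * (m * L) := by rw [hm, mul_assoc]
  have hmL : 4 * ((m * L : ℕ) : ℝ) * Real.log n ≤ n := by
    convert hcond using 2
    exact_mod_cast (by rw [mul_assoc 2 d, mul_assoc 2, hdkL]; ring : 4 * (m * L) = 2 * d * k * L)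
  have hsq : (2 * (8 * √n)) ^ (2 * m * L) = 2 ^ (8 * (m * L)) * (n : ℝ) ^ (m * L) := by
    have h256 : (2 * (8 * √n)) ^ 2 = (2 : ℝ) ^ 8 * n := by
      rw [mul_pow, mul_pow, Real.sq_sqrt n.cast_nonneg]; ring
    rw [mul_assoc 2 m L, pow_mul, h256, mul_pow, ← pow_mul]
  calc _ ≤ _ := integral_trace_symAvg_kronPow_pow_le B hMeas hRademacher m L hN hN_sub (8 * √n)
    _ ≤ n ^ m * (2 * (8 * √n)) ^ (2 * m * L)
          + n ^ m * n ^ (2 * m * L) * (9 ^ n * 9 ^ n * Real.exp (-(8 * √n) ^ 2 / 2)) := by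
        gcongr
        refine (measureReal_biUnion_le_dotProduct_mulVec_le B hMeas hIndep hRademacher hN_sub
          hN_sub (by positivity)).trans ?_
        gcongr <;> exact_mod_cast hN_card
    _ = 2 ^ (8 * (m * L)) * n ^ (m * L + m)
          + n ^ (m * L + m) * (n ^ (m * L) * (9 ^ n * 9 ^ n * Real.exp (-(8 * √n) ^ 2 / 2))) := by
        rw [hsq]; ring
    _ ≤ 2 ^ (8 * (m * L)) * n ^ (m * L + m) + n ^ (m * L + m) * 2 ^ (8 * (m * L)) := by
        gcongr
        exact (pow_mul_exp_le_one hmL).trans (one_le_pow₀ (by norm_num))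
    _ = 2 ^ (4 * d * k * L + 1) * (n : ℝ) ^ (m * L + m) := by
        rw [mul_assoc 4 d, mul_assoc 4, hdkL]; ring

/-- If `B` is an `n × n` random matrix with i.i.d. Rademacher entries and
`C' = E_{Π,Σ∈Ŝ_{dk/2}}[Π B^{⊗dk/2} Σ]`, then
`E[Tr((C' C'ᵀ)^ℓ)] ≤ 2^{4dkℓ+1} · n^{dkℓ/2 + dk/2}`. -/
theorem expected_trace_symAvg_kronPow_rademacher
    (n d k L m : ℕ) (hn : 0 < n) (hd : 0 < d) (hk : 0 < k) (hL : 0 < L)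
    (hm : d * k = 2 * m)
    (hcond : (2 * d * k * L : ℝ) * Real.log n ≤ (n : ℝ))
    {Ω : Type*} [MeasurableSpace Ω] (μ : Measure Ω) [IsProbabilityMeasure μ]
    (B : Ω → Matrix (Fin n) (Fin n) ℝ)
    (hMeas : ∀ i j, Measurable fun ω => B ω i j)
    (hIndep : iIndepFun
      (fun (p : Fin n × Fin n) ω => B ω p.1 p.2) μ)
    (hRademacher : ∀ i j, μ {ω | B ω i j = 1} = 1/2 ∧ μ {ω | B ω i j = -1} = 1/2) :
    ∫ ω, ((symAvg (kronPow m (B ω)) * (symAvg (kronPow m (B ω)))ᵀ) ^ L).trace ∂μ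
      ≤ 2 ^ (4 * d * k * L + 1) * (n : ℝ) ^ (m * L + m) :=
  expected_trace_symAvg_kronPow_rademacher_general n d k L m hm hcond μ B hMeas hIndep hRademacher
end

section
/- Let m, n, c be positive integers, and let G be a graph that is a disjoint union of at most c cycles, where a cycle of length ℓ ≥ 2 consists of ℓ vertices arranged cyclically with an edge between each consecutive pair (so a cycle of length 2 has two parallel edges between its two vertices). Suppose each vertex of G is assigned a label from [n]; the labeled edge of an edge is the unordered pair of labels of its two endpoints. If every labeled edge occurs an even number of times in total (counting all edges of G with multiplicity) and exactly m distinct labeled edges occur, then the number of distinct vertex labels used is at most m + c. -/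
open Finset

/-- The labeled edge of the cycle edge from position `t` to position `t+1 (mod L)`,
in a cycle of length `L` whose vertices carry labels `f : Fin L → Fin n`. -/
def cycEdge {n L : ℕ} (f : Fin L → Fin n) (t : Fin L) : Sym2 (Fin n) :=
  s(f t, f ⟨((t : ℕ) + 1) % L, Nat.mod_lt _ t.pos⟩)

/-!
Walking along a cycle, every label not seen before is reached through a labeled edge not seen
before, except for the very first label of the cycle. Hence each cycle adds at most one more new
label than new labeled edges, and summing over the at most `c` cycles gives the bound.
-/

section Walk

variable {α : Type*} [DecidableEq α]

def walkEdges (f : ℕ → α) (k : ℕ) : Finset (Sym2 α) :=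
  (range k).image fun i => s(f i, f (i + 1))

lemma walkEdges_succ (f : ℕ → α) (k : ℕ) :
    walkEdges f (k + 1) = insert s(f k, f (k + 1)) (walkEdges f k) := by
  simp only [walkEdges, range_add_one, image_insert]

lemma mem_image_of_mem_walkEdges {f : ℕ → α} {k : ℕ} {e : Sym2 α} {x : α}
    (he : e ∈ walkEdges f k) (hx : x ∈ e) : x ∈ (range (k + 1)).image f := by
  obtain ⟨i, hi, rfl⟩ := mem_image.mp he
  rw [mem_range] at hi
  rcases Sym2.mem_iff.mp hx with rfl | rfl
  · exact mem_image_of_mem f (mem_range.mpr (by omega))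
  · exact mem_image_of_mem f (mem_range.mpr (by omega))

theorem card_image_sdiff_le_card_walkEdges_sdiff_add_one (f : ℕ → α) {V : Finset α}
    {E : Finset (Sym2 α)} (hE : ∀ e ∈ E, ∀ x ∈ e, x ∈ V) (k : ℕ) :
    #((range (k + 1)).image f \ V) ≤ #(walkEdges f k \ E) + 1 := by
  induction k with
  | zero =>
    calc #((range 1).image f \ V) ≤ #((range 1).image f) := card_le_card sdiff_subset
      _ ≤ 1 := by simp
      _ ≤ #(walkEdges f 0 \ E) + 1 := by omega
  | succ k ih =>
    rw [range_add_one, image_insert, walkEdges_succ]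
    by_cases hold : f (k + 1) ∈ V ∨ f (k + 1) ∈ (range (k + 1)).image f
    · calc #(insert (f (k + 1)) ((range (k + 1)).image f) \ V)
            ≤ #((range (k + 1)).image f \ V) := by
              rcases hold with hV | hA
              · rw [insert_sdiff_of_mem _ hV]
              · rw [insert_eq_of_mem hA]
        _ ≤ #(walkEdges f k \ E) + 1 := ih
        _ ≤ #(insert s(f k, f (k + 1)) (walkEdges f k) \ E) + 1 := by
              gcongr
              exact subset_insert _ _
    · obtain ⟨hV, hA⟩ := not_or.mp hold
      have hnewE : s(f k, f (k + 1)) ∉ E := fun h => hV (hE _ h _ (Sym2.mem_mk_right _ _))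
      have hnewW : s(f k, f (k + 1)) ∉ walkEdges f k \ E := fun h =>
        hA (mem_image_of_mem_walkEdges (mem_sdiff.mp h).1 (Sym2.mem_mk_right _ _))
      rw [insert_sdiff_of_notMem _ hV, insert_sdiff_of_notMem _ hnewE,
        card_insert_of_notMem (fun h => hA (mem_sdiff.mp h).1), card_insert_of_notMem hnewW]
      omega

end Walk

lemma mem_image_of_mem_cycEdge {n L : ℕ} {f : Fin L → Fin n} {t : Fin L} {x : Fin n}
    (hx : x ∈ cycEdge f t) : x ∈ univ.image f := by
  rcases Sym2.mem_iff.mp hx with rfl | rfl <;> exact mem_image_of_mem f (mem_univ _)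

theorem card_image_sdiff_le_card_cycEdge_sdiff_add_one {n L : ℕ} (f : Fin L → Fin n)
    {V : Finset (Fin n)} {E : Finset (Sym2 (Fin n))} (hE : ∀ e ∈ E, ∀ x ∈ e, x ∈ V) :
    #(univ.image f \ V) ≤ #(univ.image (cycEdge f) \ E) + 1 := by
  cases L with
  | zero => simp
  | succ k =>
    -- unroll the cycle into the walk `f 0, f 1, …, f k`
    let g : ℕ → Fin n := fun i => f (Fin.ofNat (k + 1) i)
    have hvertices : univ.image f = (range (k + 1)).image g := by
      ext x
      simp only [mem_image, mem_univ, true_and, mem_range, g]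
      exact ⟨fun ⟨t, ht⟩ => ⟨t, t.isLt, by simpa using ht⟩,
        fun ⟨_, _, hx⟩ => ⟨_, hx⟩⟩
    have hedges : walkEdges g k ⊆ univ.image (cycEdge f) := by
      intro e he
      obtain ⟨i, hi, rfl⟩ := mem_image.mp he
      rw [mem_range] at hi
      refine mem_image.mpr ⟨⟨i, by omega⟩, mem_univ _, ?_⟩
      simp only [cycEdge, g]
      congr 2
      ext
      simp [Nat.mod_eq_of_lt (show i < k + 1 by omega)]
    calc #(univ.image f \ V) = #((range (k + 1)).image g \ V) := by rw [hvertices]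
      _ ≤ #(walkEdges g k \ E) + 1 := card_image_sdiff_le_card_walkEdges_sdiff_add_one g hE k
      _ ≤ #(univ.image (cycEdge f) \ E) + 1 := by gcongr

theorem card_biUnion_image_le_card_biUnion_cycEdge_add_card {ι : Type*} {n : ℕ} {L : ι → ℕ}
    (f : (j : ι) → Fin (L j) → Fin n) (s : Finset ι) :
    #(s.biUnion fun j => univ.image (f j))
      ≤ #(s.biUnion fun j => univ.image (cycEdge (f j))) + #s := by
  classical
  induction s using Finset.induction_on with
  | empty => simp
  | insert j s hj ih =>
    rw [biUnion_insert, biUnion_insert, card_insert_of_notMem hj]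
    set V := s.biUnion fun j => univ.image (f j)
    set E := s.biUnion fun j => univ.image (cycEdge (f j))
    have hE : ∀ e ∈ E, ∀ x ∈ e, x ∈ V := by
      intro e he x hx
      obtain ⟨i, hi, hei⟩ := mem_biUnion.mp he
      obtain ⟨t, -, rfl⟩ := mem_image.mp hei
      exact mem_biUnion.mpr ⟨i, hi, mem_image_of_mem_cycEdge hx⟩
    have hcycle := card_image_sdiff_le_card_cycEdge_sdiff_add_one (f j) hE
    rw [← card_sdiff_add_card, ← card_sdiff_add_card (s := univ.image (cycEdge (f j)))]
    omega

theorem distinct_labels_le_of_even_edges_general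
    (m n c : ℕ)
    (c' : ℕ) (hc' : c' ≤ c) (L : Fin c' → ℕ)
    (f : (j : Fin c') → Fin (L j) → Fin n)
    (hm' : (Finset.univ.biUnion
        (fun j : Fin c' => Finset.image (fun t : Fin (L j) => cycEdge (f j) t)
          Finset.univ)).card = m) :
    (Finset.univ.biUnion (fun j : Fin c' => Finset.image (f j) Finset.univ)).card
      ≤ m + c := by
  have h := card_biUnion_image_le_card_biUnion_cycEdge_add_card f univ
  rw [hm', card_univ, Fintype.card_fin] at h
  omega

/-- In a vertex-labeled disjoint union of at most `c` cycles in which every labeled edge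
occurs an even number of times (with multiplicity) and exactly `m` distinct labeled edges
occur, the number of distinct vertex labels is at most `m + c`. -/
theorem distinct_labels_le_of_even_edges
    (m n c : ℕ) (hm : 0 < m) (hn : 0 < n) (hc : 0 < c)
    (c' : ℕ) (hc' : c' ≤ c) (L : Fin c' → ℕ) (hL : ∀ j, 2 ≤ L j)
    (f : (j : Fin c') → Fin (L j) → Fin n)
    (heven : ∀ e : Sym2 (Fin n),
      Even (∑ j : Fin c',
        (Finset.univ.filter (fun t : Fin (L j) => cycEdge (f j) t = e)).card))
    (hm' : (Finset.univ.biUnion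
        (fun j : Fin c' => Finset.image (fun t : Fin (L j) => cycEdge (f j) t)
          Finset.univ)).card = m) :
    (Finset.univ.biUnion (fun j : Fin c' => Finset.image (f j) Finset.univ)).card
      ≤ m + c :=
  distinct_labels_le_of_even_edges_general m n c c' hc' L f hm'
end

section
/- Let G be a finite loopless multigraph in which every vertex has even degree at least 2, and let n ≥ 1. Call a labeling σ : E(G) → [n] even if for every label i ∈ [n], the edge set σ^{−1}(i) induces a subgraph of G in which every vertex has even degree. Let E_⊕(G) denote the number of vertex pairs {a,b} joined by an odd number of parallel edges. Then the number of even labelings is at most (2|E(G)| − 2|V(G)|)! · n^{|E(G)|/2 − |E_⊕(G)|/6}. -/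
open Finset

/-- A labeling `σ : E → [n]` of the edges of a multigraph is *even* if for every label `i`,
the edges carrying label `i` induce a subgraph in which every vertex has even degree. -/
abbrev IsEvenLabeling {V E : Type*} [Fintype V] [DecidableEq V] [Fintype E] [DecidableEq E]
    (ends : E → Sym2 V) (n : ℕ) (σ : E → Fin n) : Prop :=
  ∀ (i : Fin n) (v : V),
    Even ((Finset.univ.filter (fun e => σ e = i ∧ v ∈ ends e)).card)

open scoped Nat

/-!
Call two edges *threaded* when they share a vertex of degree 2, and call the classes of the
equivalence this generates *threads*. At a vertex of degree 2 both edges must carry the same label,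
so an even labeling is constant on threads. A thread all of whose vertices have degree 2 is
*closed* (a cycle component of `G`). Every other thread is *open*; it has an even and
positive, hence at least 2, number of incidences with vertices of degree at least 4, so there
are at most `2|E| - 2|V|` open threads.

Fix an even labeling. The closed threads, together with the label classes of the edges of open
threads, partition `E` into even subgraphs. Each part has at least 2 edges, a part with exactly
2 edges is a pair of parallel edges, and so every pair `{a, b}` joined by an odd number of edges
has an edge in a part with at least 3 edges. Hence `6 · #parts + |E_⊕| ≤ 3|E|`, so that the
`m` open threads use at most `K - c` labels, where `K = ⌊(3|E| - |E_⊕|) / 6⌋` and `c` is the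
number of closed threads. At most `m! · n^(K - c)` maps from `m` objects to `[n]` take at most
`K - c` values, and the closed threads contribute another factor of `n^c`.
-/

section CountingMaps

variable {α β : Type*} [Fintype β] [DecidableEq β] [Nonempty β]

theorem card_filter_card_image_le (m K : ℕ) :
    #{f : Fin m → β | #(univ.image f) ≤ K} ≤ m ! * Fintype.card β ^ K := by
  induction m generalizing K with
  | zero =>
    calc #{f : Fin 0 → β | #(univ.image f) ≤ K}
        ≤ Fintype.card (Fin 0 → β) := card_le_univ _
      _ = 1 := by simp
      _ ≤ 0 ! * Fintype.card β ^ K := by simp [Nat.one_le_iff_ne_zero, Fintype.card_ne_zero]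
  | succ m ih =>
    cases K with
    | zero => simp [univ_nonempty.ne_empty]
    | succ K =>
      -- `Fin.cons a t` either repeats a value `t j` of its tail, or takes a new value
      have hcover : ({f : Fin (m + 1) → β | #(univ.image f) ≤ K + 1} : Finset _) ⊆
          (({t : Fin m → β | #(univ.image t) ≤ K + 1} : Finset _) ×ˢ univ).image
              (fun p : (Fin m → β) × Fin m => Fin.cons (p.1 p.2) p.1) ∪
            (({t : Fin m → β | #(univ.image t) ≤ K} : Finset _) ×ˢ univ).image
              (fun p : (Fin m → β) × β => Fin.cons p.2 p.1) := by
        intro f hf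
        obtain ⟨a, t, rfl⟩ : ∃ a t, f = Fin.cons a t :=
          ⟨f 0, Fin.tail f, (Fin.cons_self_tail f).symm⟩
        have himage : univ.image (Fin.cons a t : Fin (m + 1) → β) = insert a (univ.image t) := by
          ext
          simp [Fin.exists_fin_succ, eq_comm]
        rw [mem_filter, himage] at hf
        by_cases hold : a ∈ univ.image t
        · obtain ⟨j, -, hj⟩ := mem_image.mp hold
          refine mem_union_left _ (mem_image.mpr ⟨(t, j), ?_, by simp [hj]⟩)
          simpa [insert_eq_of_mem hold] using hf.2
        · refine mem_union_right _ (mem_image.mpr ⟨(t, a), ?_, rfl⟩)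
          simpa [card_insert_of_notMem hold] using hf.2
      calc _ ≤ _ := card_le_card hcover
        _ ≤ _ := card_union_le _ _
        _ ≤ m ! * Fintype.card β ^ (K + 1) * m +
            m ! * Fintype.card β ^ K * Fintype.card β := by
          gcongr
          · refine card_image_le.trans ?_
            rw [card_product, card_univ, Fintype.card_fin]
            exact Nat.mul_le_mul_right _ (ih _)
          · refine card_image_le.trans ?_
            rw [card_product, card_univ]
            exact Nat.mul_le_mul_right _ (ih _)
        _ = (m + 1) ! * Fintype.card β ^ (K + 1) := by rw [Nat.factorial_succ]; ring

theorem card_filter_card_image_add_card_compl_le [Fintype α] [DecidableEq α] (s : Finset α)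
    (K : ℕ) : #{f : α → β | #(s.image f) + #sᶜ ≤ K} ≤ (#s)! * Fintype.card β ^ K := by
  by_cases hK : #sᶜ ≤ K
  swap
  · rw [filter_eq_empty_iff.mpr fun f _ h => hK (le_of_add_le_right h), card_empty]
    exact Nat.zero_le _
  obtain ⟨k, rfl⟩ := Nat.exists_eq_add_of_le' hK
  let e := s.equivFin
  have hinj : Set.InjOn (fun f : α → β => ((fun i => f (e.symm i) : Fin #s → β),
      (fun x => f x : (sᶜ : Finset α) → β))) Set.univ := by
    intro f _ g _ hfg
    simp only [Prod.mk.injEq, funext_iff] at hfg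
    funext x
    by_cases hx : x ∈ s
    · simpa using hfg.1 (e ⟨x, hx⟩)
    · exact hfg.2 ⟨x, mem_compl.mpr hx⟩
  have himage (f : α → β) : univ.image (fun i => f (e.symm i)) = s.image f := by
    ext b
    simp only [mem_image, mem_univ, true_and]
    constructor
    · rintro ⟨i, rfl⟩
      exact ⟨_, (e.symm i).2, rfl⟩
    · rintro ⟨a, ha, rfl⟩
      exact ⟨e ⟨a, ha⟩, by simp⟩
  calc _ ≤ #(({g : Fin #s → β | #(univ.image g) ≤ k} : Finset _) ×ˢ
        (univ : Finset ((sᶜ : Finset α) → β))) := by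
        refine card_le_card_of_injOn _ (fun f hf => ?_) (hinj.mono (Set.subset_univ _))
        simp only [coe_filter, coe_product, coe_univ, Set.mem_prod, Set.mem_univ, and_true,
          mem_univ, true_and, Set.mem_ofPred_eq, himage] at hf ⊢
        omega
    _ = #({g : Fin #s → β | #(univ.image g) ≤ k} : Finset _) * Fintype.card β ^ #sᶜ := by
        rw [card_product, card_univ, Fintype.card_fun, Fintype.card_coe]
    _ ≤ (#s)! * Fintype.card β ^ k * Fintype.card β ^ #sᶜ :=
        Nat.mul_le_mul_right _ (card_filter_card_image_le _ _)
    _ = (#s)! * Fintype.card β ^ (k + #sᶜ) := by ring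

end CountingMaps

namespace Multigraph

variable {V E : Type*} {ends : E → Sym2 V}

section Incidence

def IsUnionOfComponents (ends : E → Sym2 V) (p : E → Prop) : Prop :=
  ∀ v e f, v ∈ ends e → v ∈ ends f → p e → p f

theorem IsUnionOfComponents.not {p : E → Prop} (hp : IsUnionOfComponents ends p) :
    IsUnionOfComponents ends (¬ p ·) :=
  fun v e f he hf hpe hpf => hpe (hp v f e hf he hpf)

theorem ends_eq_of_forall_mem (hloop : ∀ e, ¬ (ends e).IsDiag) {e f : E}
    (h : ∀ v ∈ ends e, v ∈ ends f) : ends e = ends f := by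
  induction he : ends e using Sym2.ind with
  | _ a b =>
    have hab : a ≠ b := fun hab => hloop e (by simp [he, hab])
    rw [he] at h
    exact ((Sym2.mem_and_mem_iff hab).mp ⟨h a (by simp), h b (by simp)⟩).symm

end Incidence

section Finite

variable [DecidableEq V]

def IsEvenSubgraph (ends : E → Sym2 V) (F : Finset E) : Prop :=
  ∀ v, Even #{e ∈ F | v ∈ ends e}

theorem sum_card_filter_mem_ends [Fintype V] (hloop : ∀ e, ¬ (ends e).IsDiag) (F : Finset E) :
    ∑ v, #{e ∈ F | v ∈ ends e} = 2 * #F := by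
  have hdouble := sum_card_bipartiteAbove_eq_sum_card_bipartiteBelow (s := F)
    (t := (univ : Finset V)) (r := fun e v => v ∈ ends e)
  simp only [bipartiteAbove, bipartiteBelow] at hdouble
  rw [← hdouble, sum_congr rfl fun e _ => ?_, sum_const, smul_eq_mul, mul_comm]
  rw [← Sym2.card_toFinset_of_not_isDiag _ (hloop e)]
  congr 1
  ext
  simp

namespace IsEvenSubgraph

variable {F : Finset E}

theorem two_le_card (hF : IsEvenSubgraph ends F) (hne : F.Nonempty) : 2 ≤ #F := by
  obtain ⟨e, he⟩ := hne
  obtain ⟨v, hv⟩ : ∃ v, v ∈ ends e := ⟨_, Sym2.out_fst_mem _⟩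
  have hpos : 0 < #{e ∈ F | v ∈ ends e} := card_pos.mpr ⟨e, by simp [he, hv]⟩
  have hle : #{e ∈ F | v ∈ ends e} ≤ #F := card_filter_le _ _
  obtain ⟨k, hk⟩ := hF v
  omega

theorem ends_eq_of_pair [DecidableEq E] (hloop : ∀ e, ¬ (ends e).IsDiag) {e f : E}
    (hF : IsEvenSubgraph ends {e, f}) : ends e = ends f := by
  refine ends_eq_of_forall_mem hloop fun v hv => ?_
  by_contra hfv
  have hsingle : ({g ∈ {e, f} | v ∈ ends g} : Finset E) = {e} := by
    ext g
    simp only [mem_filter, mem_insert, mem_singleton]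
    constructor
    · rintro ⟨rfl | rfl, hg⟩
      · rfl
      · exact absurd hg hfv
    · rintro rfl
      exact ⟨Or.inl rfl, hv⟩
  have h := hF v
  rw [hsingle, card_singleton] at h
  exact Nat.not_even_one h

theorem filter (hF : IsEvenSubgraph ends F) {p : E → Prop} [DecidablePred p]
    (hp : IsUnionOfComponents ends p) : IsEvenSubgraph ends {e ∈ F | p e} := by
  intro v
  rw [filter_filter]
  by_cases hv : ∃ e, v ∈ ends e ∧ p e
  · obtain ⟨e, he, hpe⟩ := hv
    convert hF v using 3
    exact and_iff_right_of_imp fun hf => hp v e _ he hf hpe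
  · push Not at hv
    rw [filter_false_of_mem fun f _ ⟨hpf, hf⟩ => hv f hf hpf]
    exact Even.zero

end IsEvenSubgraph

variable [Fintype E]

def degree (ends : E → Sym2 V) (v : V) : ℕ := #{e | v ∈ ends e}

theorem IsEvenSubgraph.mem_of_degree_eq_two {F : Finset E} (hF : IsEvenSubgraph ends F) {v : V}
    (hv : degree ends v = 2) {e f : E} (he : v ∈ ends e) (hf : v ∈ ends f) (heF : e ∈ F) :
    f ∈ F := by
  have hsub : {g ∈ F | v ∈ ends g} ⊆ ({g | v ∈ ends g} : Finset E) :=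
    filter_subset_filter _ (subset_univ F)
  have hstar : {g ∈ F | v ∈ ends g} = ({g | v ∈ ends g} : Finset E) := by
    refine eq_of_subset_of_card_le hsub ?_
    have hpos : 0 < #{g ∈ F | v ∈ ends g} := card_pos.mpr ⟨e, by simp [heF, he]⟩
    obtain ⟨k, hk⟩ := hF v
    change #{g | v ∈ ends g} = 2 at hv
    omega
  have hfF : f ∈ {g ∈ F | v ∈ ends g} := hstar ▸ by simp [hf]
  exact (mem_filter.mp hfF).1

theorem six_mul_card_image_add_card_filter_le {ι : Type*} [DecidableEq ι] (b : E → ι)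
    (hb : ∀ i, IsEvenSubgraph ends {e | b e = i}) :
    6 * #(univ.image b) + #({e | 3 ≤ #{f | b f = b e}} : Finset E) ≤ 3 * Fintype.card E := by
  set big : Finset E := {e | 3 ≤ #{f | b f = b e}}
  have hterm : ∀ i ∈ univ.image b, 6 + #{e ∈ big | b e = i} ≤ 3 * #{e | b e = i} := by
    intro i hi
    obtain ⟨e, -, rfl⟩ := mem_image.mp hi
    have h2 : 2 ≤ #{f | b f = b e} := (hb (b e)).two_le_card ⟨e, by simp⟩
    by_cases h3 : 3 ≤ #{f | b f = b e}
    · have := card_le_card (filter_subset_filter (b · = b e) (subset_univ big))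
      omega
    · rw [filter_false_of_mem fun f hf hfe => h3 (by simpa [big, hfe] using hf), card_empty]
      omega
  calc 6 * #(univ.image b) + #big
      = ∑ i ∈ univ.image b, (6 + #{e ∈ big | b e = i}) := by
        rw [sum_add_distrib, sum_const, smul_eq_mul, mul_comm,
          card_eq_sum_card_fiberwise fun e _ => mem_image_of_mem b (mem_univ e)]
    _ ≤ ∑ i ∈ univ.image b, 3 * #{e | b e = i} := sum_le_sum hterm
    _ = 3 * Fintype.card E := by rw [← mul_sum, ← card_eq_sum_card_image b univ, card_univ]

def threadSetoid (ends : E → Sym2 V) : Setoid E :=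
  Relation.EqvGen.setoid fun e f => ∃ v, degree ends v = 2 ∧ v ∈ ends e ∧ v ∈ ends f

abbrev Thread (ends : E → Sym2 V) : Type _ := Quotient (threadSetoid ends)

def thread (ends : E → Sym2 V) (e : E) : Thread ends := Quotient.mk _ e

def Thread.IsClosed (c : Thread ends) : Prop :=
  ∀ e, thread ends e = c → ∀ v ∈ ends e, degree ends v = 2

noncomputable instance : Fintype (Thread ends) := Fintype.ofFinite _

noncomputable instance : DecidableEq (Thread ends) := Classical.decEq _

noncomputable instance : DecidablePred (Thread.IsClosed (ends := ends)) := Classical.decPred _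

theorem thread_out (c : Thread ends) : thread ends c.out = c := Quotient.out_eq c

theorem thread_eq_of_degree_eq_two {v : V} (hv : degree ends v = 2) {e f : E}
    (he : v ∈ ends e) (hf : v ∈ ends f) : thread ends e = thread ends f :=
  Quotient.sound (Relation.EqvGen.rel _ _ ⟨v, hv, he, hf⟩)

theorem Thread.IsClosed.thread_eq {e f : E} (hc : (thread ends e).IsClosed) {v : V}
    (he : v ∈ ends e) (hf : v ∈ ends f) : thread ends f = thread ends e :=
  thread_eq_of_degree_eq_two (hc e rfl v he) hf he

theorem isUnionOfComponents_thread (q : Thread ends → Prop) (hq : ∀ c, q c → c.IsClosed) :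
    IsUnionOfComponents ends (fun e => q (thread ends e)) :=
  fun _ e f he hf (hqe : q (thread ends e)) =>
    show q (thread ends f) by rwa [(hq _ hqe).thread_eq he hf]

theorem even_card_filter_thread_eq_of_degree_eq_two {v : V} (hv : degree ends v = 2)
    (c : Thread ends) : Even #{e | thread ends e = c ∧ v ∈ ends e} := by
  by_cases h : ∃ e, thread ends e = c ∧ v ∈ ends e
  · obtain ⟨e, rfl, he⟩ := h
    have hstar : ({f | thread ends f = thread ends e ∧ v ∈ ends f} : Finset E) =
        ({f | v ∈ ends f} : Finset E) := by
      ext f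
      simp only [mem_filter, mem_univ, true_and, and_iff_right_iff_imp]
      exact fun hf => thread_eq_of_degree_eq_two hv hf he
    rw [hstar]
    change Even (degree ends v)
    rw [hv]
    exact even_two
  · rw [filter_false_of_mem fun f _ hf => h ⟨f, hf⟩, card_empty]
    exact Even.zero

theorem sum_sum_card_filter_thread_eq (W : Finset V) :
    ∑ c : Thread ends, ∑ v ∈ W, #{e | thread ends e = c ∧ v ∈ ends e} =
      ∑ v ∈ W, degree ends v := by
  rw [sum_comm]
  refine sum_congr rfl fun v _ => ?_
  rw [degree, card_eq_sum_card_fiberwise fun e _ => mem_univ (thread ends e)]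
  simp only [filter_filter, and_comm]

noncomputable def threadLabel {n : ℕ} (σ : E → Fin n) (c : Thread ends) :
    Fin n ⊕ Thread ends :=
  if c.IsClosed then .inr c else .inl (σ c.out)

theorem card_image_threadLabel {n : ℕ} (σ : E → Fin n) :
    #(univ.image fun e => threadLabel σ (thread ends e)) =
      #(({c | ¬ c.IsClosed} : Finset (Thread ends)).image fun c => σ c.out) +
        #({c | ¬ c.IsClosed} : Finset (Thread ends))ᶜ := by
  have hsurj : Function.Surjective (thread ends) := Quotient.mk_surjective
  rw [← card_disjSum, show (fun e => threadLabel σ (thread ends e)) =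
    threadLabel σ ∘ thread ends from rfl, ← image_image, image_univ_of_surjective hsurj]
  congr 1
  ext x
  rcases x with i | c
  · simp [threadLabel, ite_eq_iff]
  · by_cases hc : c.IsClosed <;> simp [threadLabel, ite_eq_iff, hc]

variable [Fintype V]

def oddPairs (ends : E → Sym2 V) : Finset (Sym2 V) := {s | Odd #{e | ends e = s}}

theorem card_oddPairs_le : #(oddPairs ends) ≤ Fintype.card E := by
  have hsub : oddPairs ends ⊆ univ.image ends := fun s hs => by
    obtain ⟨e, he⟩ := card_pos.mp (mem_filter.mp hs).2.pos
    exact mem_image.mpr ⟨e, mem_univ e, (mem_filter.mp he).2⟩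
  exact (card_le_card hsub).trans card_image_le

-- the parity comes from the vertices of degree 2, each of which a thread meets 0 or 2 times
theorem two_le_sum_card_filter_thread_eq (hloop : ∀ e, ¬ (ends e).IsDiag) {c : Thread ends}
    (hc : ¬ c.IsClosed) :
    2 ≤ ∑ v ∈ {v | degree ends v ≠ 2}, #{e | thread ends e = c ∧ v ∈ ends e} := by
  set d : V → ℕ := fun v => #{e | thread ends e = c ∧ v ∈ ends e}
  have htotal : ∑ v, d v = 2 * #{e | thread ends e = c} := by
    simpa only [d, filter_filter] using sum_card_filter_mem_ends hloop {e | thread ends e = c}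
  have hrest : Even (∑ v ∈ {v | ¬ degree ends v ≠ 2}, d v) :=
    even_sum _ fun v hv => even_card_filter_thread_eq_of_degree_eq_two
      (not_not.mp (mem_filter.mp hv).2) c
  have heven : Even (∑ v ∈ {v | degree ends v ≠ 2}, d v) := by
    have hsplit := sum_filter_add_sum_filter_not univ (fun v => degree ends v ≠ 2) d
    rw [htotal] at hsplit
    exact (Nat.even_add.mp (hsplit ▸ even_two_mul _)).mpr hrest
  have hpos : 0 < ∑ v ∈ {v | degree ends v ≠ 2}, d v := by
    simp only [Thread.IsClosed, not_forall] at hc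
    obtain ⟨e, hec, v, hv, hdeg⟩ := hc
    have hdv : 0 < d v := card_pos.mpr ⟨e, mem_filter.mpr ⟨mem_univ e, hec, hv⟩⟩
    exact hdv.trans_le
      (single_le_sum (fun _ _ => Nat.zero_le _) (mem_filter.mpr ⟨mem_univ v, hdeg⟩))
  obtain ⟨k, hk⟩ := heven
  change 2 ≤ ∑ v ∈ {v | degree ends v ≠ 2}, d v
  omega

theorem card_filter_not_isClosed_le (hloop : ∀ e, ¬ (ends e).IsDiag)
    (hdeg : ∀ v, Even (degree ends v) ∧ 2 ≤ degree ends v) :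
    #{c : Thread ends | ¬ c.IsClosed} ≤ 2 * Fintype.card E - 2 * Fintype.card V := by
  have hopen : 2 * #{c : Thread ends | ¬ c.IsClosed} ≤
      ∑ v ∈ {v | degree ends v ≠ 2}, degree ends v := by
    rw [← sum_sum_card_filter_thread_eq, mul_comm, ← smul_eq_mul]
    refine (card_nsmul_le_sum _ _ _ fun c hc => ?_).trans
      (sum_le_sum_of_subset (subset_univ _))
    exact two_le_sum_card_filter_thread_eq hloop (mem_filter.mp hc).2
  have hbranch : 4 * #({v | degree ends v ≠ 2} : Finset V) ≤
      ∑ v ∈ {v | degree ends v ≠ 2}, degree ends v := by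
    rw [mul_comm, ← smul_eq_mul]
    refine card_nsmul_le_sum _ _ _ fun v hv => ?_
    have hv2 : degree ends v ≠ 2 := (mem_filter.mp hv).2
    obtain ⟨⟨k, hk⟩, h2⟩ := hdeg v
    omega
  have hrest : ∑ v ∈ {v | ¬ degree ends v ≠ 2}, degree ends v =
      2 * #({v | ¬ degree ends v ≠ 2} : Finset V) := by
    rw [sum_congr rfl fun v hv => not_not.mp (mem_filter.mp hv).2, sum_const, smul_eq_mul,
      mul_comm]
  have hhandshake : ∑ v, degree ends v = 2 * Fintype.card E := by
    rw [← card_univ]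
    exact sum_card_filter_mem_ends hloop univ
  rw [← sum_filter_add_sum_filter_not univ (fun v => degree ends v ≠ 2), hrest] at hhandshake
  have hcard := card_filter_add_card_filter_not (s := (univ : Finset V))
    (fun v => degree ends v ≠ 2)
  rw [card_univ] at hcard
  omega

variable [DecidableEq E]

theorem oddPairs_subset_image_ends {ι : Type*} [DecidableEq ι] (b : E → ι)
    (hloop : ∀ e, ¬ (ends e).IsDiag) (hb : ∀ i, IsEvenSubgraph ends {e | b e = i}) :
    oddPairs ends ⊆ ({e | 3 ≤ #{f | b f = b e}} : Finset E).image ends := by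
  intro s hs
  by_contra hbig
  set P : Finset E := {e | ends e = s}
  -- otherwise every part meeting `P` is a pair of parallel edges inside `P`, so `#P` is even
  have hfiber : ∀ e ∈ P, #{f | b f = b e} = 2 ∧ ∀ f, b f = b e → f ∈ P := by
    intro e he
    have hes : ends e = s := (mem_filter.mp he).2
    have h2 : 2 ≤ #{f | b f = b e} := (hb (b e)).two_le_card ⟨e, by simp⟩
    have h3 : ¬ 3 ≤ #{f | b f = b e} := fun h3 =>
      hbig (mem_image.mpr ⟨e, by simpa using h3, hes⟩)
    obtain ⟨x, y, -, hxy⟩ := card_eq_two.mp (show #{f | b f = b e} = 2 by omega)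
    have hpar : ends x = ends y := (hxy ▸ hb (b e)).ends_eq_of_pair hloop
    have hmem : ∀ f, b f = b e → f = x ∨ f = y := fun f hf => by
      simpa [hxy] using (mem_filter.mpr ⟨mem_univ f, hf⟩ : f ∈ ({f | b f = b e} : Finset E))
    refine ⟨by omega, fun f hf => ?_⟩
    have hxs : ends x = s := by
      rcases hmem e rfl with rfl | rfl
      · exact hes
      · rw [hpar, hes]
    rcases hmem f hf with rfl | rfl <;> simp [P, hxs, ← hpar]
  have hsum : ∑ i ∈ P.image b, #{e ∈ P | b e = i} = ∑ i ∈ P.image b, 2 := by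
    refine sum_congr rfl fun i hi => ?_
    obtain ⟨e, he, rfl⟩ := mem_image.mp hi
    rw [← (hfiber e he).1]
    congr 1
    ext f
    simp only [mem_filter, mem_univ, true_and, and_iff_right_iff_imp]
    exact (hfiber e he).2 f
  have heven : Even #P := by
    rw [card_eq_sum_card_image b P, hsum, sum_const, smul_eq_mul]
    exact even_two.mul_left _
  exact Nat.not_even_iff_odd.mpr (mem_filter.mp hs).2 heven

theorem six_mul_card_image_add_card_oddPairs_le {ι : Type*} [DecidableEq ι] (b : E → ι)
    (hloop : ∀ e, ¬ (ends e).IsDiag) (hb : ∀ i, IsEvenSubgraph ends {e | b e = i}) :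
    6 * #(univ.image b) + #(oddPairs ends) ≤ 3 * Fintype.card E :=
  calc 6 * #(univ.image b) + #(oddPairs ends)
      ≤ 6 * #(univ.image b) + #({e | 3 ≤ #{f | b f = b e}} : Finset E) := by
        gcongr
        exact (card_le_card (oddPairs_subset_image_ends b hloop hb)).trans card_image_le
    _ ≤ 3 * Fintype.card E := six_mul_card_image_add_card_filter_le b hb

namespace IsEvenLabeling

variable {n : ℕ} {σ : E → Fin n}

theorem isEvenSubgraph_fiber (hσ : IsEvenLabeling ends n σ) (i : Fin n) :
    IsEvenSubgraph ends {e | σ e = i} := by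
  intro v
  rw [filter_filter]
  exact hσ i v

theorem apply_eq_of_thread_eq (hσ : IsEvenLabeling ends n σ) {e f : E}
    (h : thread ends e = thread ends f) : σ e = σ f := by
  have hrel : Relation.EqvGen _ e f := Quotient.exact h
  clear h
  induction hrel with
  | rel e f hef =>
    obtain ⟨v, hv, he, hf⟩ := hef
    have hfσ := (isEvenSubgraph_fiber hσ (σ e)).mem_of_degree_eq_two hv he hf (by simp)
    exact ((mem_filter.mp hfσ).2).symm
  | refl => rfl
  | symm _ _ _ ih => exact ih.symm
  | trans _ _ _ _ _ ih₁ ih₂ => exact ih₁.trans ih₂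

theorem apply_out_thread (hσ : IsEvenLabeling ends n σ) (e : E) : σ (thread ends e).out = σ e :=
  apply_eq_of_thread_eq hσ (thread_out _)

theorem isEvenSubgraph_fiber_threadLabel (hσ : IsEvenLabeling ends n σ)
    (hdeg : ∀ v, Even (degree ends v)) (x : Fin n ⊕ Thread ends) :
    IsEvenSubgraph ends {e | threadLabel σ (thread ends e) = x} := by
  rcases x with i | c
  · have hfiber : ({e | threadLabel σ (thread ends e) = .inl i} : Finset E) =
        ({e ∈ ({e | σ e = i} : Finset E) | ¬ (thread ends e).IsClosed} : Finset E) := by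
      ext e
      by_cases hc : (thread ends e).IsClosed <;>
        simp [threadLabel, hc, apply_out_thread hσ]
    rw [hfiber]
    exact (isEvenSubgraph_fiber hσ i).filter (isUnionOfComponents_thread _ fun _ h => h).not
  · have hfiber : ({e | threadLabel σ (thread ends e) = .inr c} : Finset E) =
        ({e ∈ univ | (thread ends e).IsClosed ∧ thread ends e = c} : Finset E) := by
      ext e
      rw [mem_filter, mem_filter]
      by_cases hc : (thread ends e).IsClosed <;> simp [threadLabel, hc]
    rw [hfiber]
    exact IsEvenSubgraph.filter hdeg (isUnionOfComponents_thread (fun d => d.IsClosed ∧ d = c)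
      fun _ h => h.1)

theorem six_mul_card_add_card_oddPairs_le (hσ : IsEvenLabeling ends n σ)
    (hloop : ∀ e, ¬ (ends e).IsDiag) (hdeg : ∀ v, Even (degree ends v)) :
    6 * (#(({c | ¬ c.IsClosed} : Finset (Thread ends)).image fun c => σ c.out) +
        #({c | ¬ c.IsClosed} : Finset (Thread ends))ᶜ) + #(oddPairs ends) ≤
      3 * Fintype.card E := by
  rw [← card_image_threadLabel]
  exact six_mul_card_image_add_card_oddPairs_le _ hloop
    (isEvenSubgraph_fiber_threadLabel hσ hdeg)

end IsEvenLabeling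

theorem card_filter_isEvenLabeling_le {n : ℕ} (hn : 1 ≤ n) (hloop : ∀ e, ¬ (ends e).IsDiag)
    (hdeg : ∀ v, Even (degree ends v) ∧ 2 ≤ degree ends v) :
    #{σ : E → Fin n | IsEvenLabeling ends n σ} ≤
      (2 * Fintype.card E - 2 * Fintype.card V)! *
        n ^ ((3 * Fintype.card E - #(oddPairs ends)) / 6) := by
  have : Nonempty (Fin n) := ⟨⟨0, hn⟩⟩
  set s : Finset (Thread ends) := {c | ¬ c.IsClosed} with hs
  set K := (3 * Fintype.card E - #(oddPairs ends)) / 6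
  have hmaps : ∀ σ ∈ ({σ : E → Fin n | IsEvenLabeling ends n σ} : Finset _),
      (fun c => σ c.out) ∈
        ({h : Thread ends → Fin n | #(s.image h) + #sᶜ ≤ K} : Finset _) := by
    intro σ hσ
    have hbound := IsEvenLabeling.six_mul_card_add_card_oddPairs_le (mem_filter.mp hσ).2 hloop
      fun v => (hdeg v).1
    rw [← hs] at hbound
    simp only [mem_filter, mem_univ, true_and]
    omega
  have hinj : Set.InjOn (fun (σ : E → Fin n) (c : Thread ends) => σ c.out)
      {σ | IsEvenLabeling ends n σ} := by
    intro σ hσ τ hτ hστ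
    funext e
    rw [← IsEvenLabeling.apply_out_thread hσ, ← IsEvenLabeling.apply_out_thread hτ]
    exact congrFun hστ (thread ends e)
  calc _ ≤ #({h : Thread ends → Fin n | #(s.image h) + #sᶜ ≤ K} : Finset _) :=
        card_le_card_of_injOn _ hmaps (by simpa using hinj)
    _ ≤ (#s)! * n ^ K := by
        simpa using card_filter_card_image_add_card_compl_le (β := Fin n) s K
    _ ≤ _ := Nat.mul_le_mul_right _ (Nat.factorial_le (card_filter_not_isClosed_le hloop hdeg))

end Finite

end Multigraph

open Multigraph in
/-- In a finite loopless multigraph in which every vertex has even degree at least 2, the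
number of even labelings `σ : E(G) → [n]` is at most
`(2|E| − 2|V|)! · n^{|E|/2 − |E_⊕|/6}`, where `E_⊕` counts vertex pairs joined by an odd
number of parallel edges. -/
theorem count_even_labelings_le
    {V E : Type*} [Fintype V] [DecidableEq V] [Fintype E] [DecidableEq E]
    (n : ℕ) (hn : 1 ≤ n)
    (ends : E → Sym2 V) (hloop : ∀ e, ¬ (ends e).IsDiag)
    (hdeg : ∀ v : V,
      Even ((Finset.univ.filter (fun e => v ∈ ends e)).card) ∧
      2 ≤ (Finset.univ.filter (fun e => v ∈ ends e)).card) :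
    (((Finset.univ.filter (fun σ : E → Fin n => IsEvenLabeling ends n σ)).card : ℝ))
      ≤ (Nat.factorial (2 * Fintype.card E - 2 * Fintype.card V) : ℝ) *
        (n : ℝ) ^ ((Fintype.card E : ℝ) / 2 -
          ((Finset.univ.filter (fun s : Sym2 V =>
            Odd ((Finset.univ.filter (fun e => ends e = s)).card))).card : ℝ) / 6) := by
  change _ ≤ _ * _ ^ (_ - (#(oddPairs ends) : ℝ) / 6)
  set K := (3 * Fintype.card E - #(oddPairs ends)) / 6
  have hK : (K : ℝ) ≤ (Fintype.card E : ℝ) / 2 - (#(oddPairs ends) : ℝ) / 6 := by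
    have h6 : 6 * K + #(oddPairs ends) ≤ 3 * Fintype.card E := by
      have := card_oddPairs_le (ends := ends)
      omega
    have : 6 * (K : ℝ) + #(oddPairs ends) ≤ 3 * Fintype.card E := by exact_mod_cast h6
    linarith
  calc ((#{σ : E → Fin n | IsEvenLabeling ends n σ} : ℕ) : ℝ)
      ≤ ((2 * Fintype.card E - 2 * Fintype.card V)! * n ^ K : ℕ) := by
        exact_mod_cast card_filter_isEvenLabeling_le hn hloop hdeg
    _ = (2 * Fintype.card E - 2 * Fintype.card V)! * (n : ℝ) ^ (K : ℝ) := by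
        rw [Real.rpow_natCast]
        push_cast
        rfl
    _ ≤ _ := by
        gcongr
        exact_mod_cast hn
end

section
/- Let G be a finite loopless multigraph, and suppose the edge multiset E(G) is partitioned into t nonempty parts E₁,…,E_t, each of which induces a subgraph of G in which every vertex has even degree (an Eulerian subgraph). Let E_⊕(G) denote the number of vertex pairs {a,b} joined by an odd number of parallel edges. Then t ≤ |E(G)|/2 − |E_⊕(G)|/6. -/
open Finset

/-!
Write `m_j` for the size of the part `E_j` and `Q_j` for the set of pairs of odd multiplicity
in `E_j`. Reducing multiplicities mod 2 keeps degrees even, so `Q_j` is a simple graph with all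
degrees even: it is empty or has at least three edges. A nonempty part of even degrees has at
least two edges, and `|Q_j| ≤ m_j`; in both cases `6 + |Q_j| ≤ 3 m_j`. A pair that is odd in
`G` is odd in some part, so `|E_⊕(G)| ≤ ∑ |Q_j|`, and summing gives
`6 t + |E_⊕(G)| ≤ 3 |E(G)|`.
-/

lemma Finset.exists_mem_ne_of_even_card {α : Type*} {s : Finset α} {x : α} (hx : x ∈ s)
    (hs : Even #s) : ∃ y ∈ s, y ≠ x := by
  refine s.exists_mem_ne ?_ x
  obtain ⟨k, hk⟩ := hs
  have := card_pos.2 ⟨x, hx⟩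
  omega

section Multigraph

variable {V E : Type*} [DecidableEq V] (ends : E → Sym2 V)

def edgeMult (F : Finset E) (s : Sym2 V) : ℕ := #{e ∈ F | ends e = s}

def oddPairs [Fintype V] (F : Finset E) : Finset (Sym2 V) := {s | Odd (edgeMult ends F s)}

def IsEulerian (F : Finset E) : Prop := ∀ v, Even #{e ∈ F | v ∈ ends e}

variable {ends}

lemma two_lt_card_of_forall_not_isDiag_of_even_degree {Q : Finset (Sym2 V)} (hQ : Q.Nonempty)
    (hdiag : ∀ s ∈ Q, ¬ s.IsDiag) (heven : ∀ v, Even #{s ∈ Q | v ∈ s}) : 2 < #Q := by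
  obtain ⟨s, hs⟩ := hQ
  induction s using Sym2.ind with | h a b => ?_
  have hab : a ≠ b := fun h => hdiag _ hs (h ▸ Sym2.mk_isDiag_iff.2 rfl)
  have other : ∀ v ∈ s(a, b), ∃ s' ∈ Q, v ∈ s' ∧ s' ≠ s(a, b) := fun v hv => by
    obtain ⟨s', hs', hne⟩ := exists_mem_ne_of_even_card (mem_filter.2 ⟨hs, hv⟩) (heven v)
    exact ⟨s', (mem_filter.1 hs').1, (mem_filter.1 hs').2, hne⟩
  obtain ⟨sa, hsa, hasa, hsa_ne⟩ := other a (Sym2.mem_mk_left a b)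
  obtain ⟨sb, hsb, hbsb, hsb_ne⟩ := other b (Sym2.mem_mk_right a b)
  have hsab : sa ≠ sb := by
    rintro rfl
    exact hsa_ne ((Sym2.mem_and_mem_iff hab).1 ⟨hasa, hbsb⟩)
  exact two_lt_card.2 ⟨_, hs, sa, hsa, sb, hsb, hsa_ne.symm, hsb_ne.symm, hsab⟩

lemma IsEulerian.two_le_card {F : Finset E} (hF : IsEulerian ends F) (hne : F.Nonempty) :
    2 ≤ #F := by
  obtain ⟨e, he⟩ := hne
  obtain ⟨e', he', hne'⟩ :=
    exists_mem_ne_of_even_card (mem_filter.2 ⟨he, Sym2.out_fst_mem (ends e)⟩) (hF _)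
  exact one_lt_card.2 ⟨e', (mem_filter.1 he').1, e, he, hne'⟩

variable [Fintype V]

lemma card_filter_eq_sum_edgeMult (F : Finset E) (p : Sym2 V → Prop) [DecidablePred p] :
    #{e ∈ F | p (ends e)} = ∑ s with p s, edgeMult ends F s := by
  rw [card_eq_sum_card_fiberwise (f := ends) (t := {s | p s})
    fun e he => by simpa using (mem_filter.1 he).2]
  refine sum_congr rfl fun s hs => ?_
  rw [edgeMult, filter_filter]
  refine congrArg card (filter_congr fun e _ => ⟨fun h => h.2, fun h => ⟨h ▸ ?_, h⟩⟩)
  simpa using hs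

lemma oddPairs_subset_image (F : Finset E) : oddPairs ends F ⊆ F.image ends := by
  intro s hs
  obtain ⟨e, he⟩ := card_pos.1 (mem_filter.1 hs).2.pos
  obtain ⟨heF, rfl⟩ := mem_filter.1 he
  exact mem_image_of_mem ends heF

lemma card_oddPairs_le (F : Finset E) : #(oddPairs ends F) ≤ #F :=
  (card_le_card (oddPairs_subset_image F)).trans card_image_le

lemma IsEulerian.even_card_oddPairs_incident {F : Finset E} (hF : IsEulerian ends F) (v : V) :
    Even #{s ∈ oddPairs ends F | v ∈ s} := by
  have h := hF v
  rw [card_filter_eq_sum_edgeMult F (v ∈ ·), even_sum_iff_even_card_odd] at h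
  simpa only [oddPairs, filter_filter, and_comm] using h

lemma IsEulerian.six_add_card_oddPairs_le {F : Finset E} (hF : IsEulerian ends F)
    (hne : F.Nonempty) (hloop : ∀ e ∈ F, ¬ (ends e).IsDiag) :
    6 + #(oddPairs ends F) ≤ 3 * #F := by
  have hQF := card_oddPairs_le (ends := ends) F
  rcases (oddPairs ends F).eq_empty_or_nonempty with hQ | hQ
  · have := hF.two_le_card hne
    rw [hQ, card_empty]
    omega
  · have hdiag : ∀ s ∈ oddPairs ends F, ¬ s.IsDiag := fun s hs => by
      obtain ⟨e, he, rfl⟩ := mem_image.1 (oddPairs_subset_image F hs)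
      exact hloop e he
    have := two_lt_card_of_forall_not_isDiag_of_even_degree hQ hdiag
      hF.even_card_oddPairs_incident
    omega

lemma oddPairs_subset_biUnion_fiber {ι : Type*} [Fintype ι] [DecidableEq ι] (part : E → ι)
    (F : Finset E) :
    oddPairs ends F ⊆ univ.biUnion fun j => oddPairs ends {e ∈ F | part e = j} := by
  intro s hs
  have hsum : edgeMult ends F s = ∑ j, edgeMult ends {e ∈ F | part e = j} s := by
    rw [edgeMult, card_eq_sum_card_fiberwise (f := part) (t := univ)
      fun _ _ => mem_coe.2 (mem_univ _)]
    exact sum_congr rfl fun j _ => by rw [edgeMult, filter_comm]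
  have hodd : Odd (∑ j, edgeMult ends {e ∈ F | part e = j} s) := hsum ▸ (mem_filter.1 hs).2
  rw [odd_sum_iff_odd_card_odd] at hodd
  obtain ⟨j, hj⟩ := card_pos.1 hodd.pos
  exact mem_biUnion.2 ⟨j, mem_univ _, by simpa [oddPairs] using hj⟩

lemma six_mul_card_add_card_oddPairs_le {ι : Type*} [Fintype ι] [DecidableEq ι] [Fintype E]
    (part : E → ι) (hsurj : Function.Surjective part) (hloop : ∀ e, ¬ (ends e).IsDiag)
    (heul : ∀ j, IsEulerian ends {e | part e = j}) :
    6 * Fintype.card ι + #(oddPairs ends univ) ≤ 3 * Fintype.card E := by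
  have hpart j : 6 + #(oddPairs ends {e | part e = j}) ≤ 3 * #{e | part e = j} :=
    (heul j).six_add_card_oddPairs_le (let ⟨e, he⟩ := hsurj j; ⟨e, by simpa⟩)
      fun e _ => hloop e
  have hodd : #(oddPairs ends univ) ≤ ∑ j, #(oddPairs ends {e | part e = j}) :=
    (card_le_card (oddPairs_subset_biUnion_fiber part univ)).trans card_biUnion_le
  have hcard : Fintype.card E = ∑ j, #{e | part e = j} :=
    card_eq_sum_card_fiberwise fun _ _ => mem_coe.2 (mem_univ _)
  have hsum := sum_le_sum fun j (_ : j ∈ univ) => hpart j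
  rw [sum_add_distrib, sum_const, card_univ, smul_eq_mul, ← mul_sum] at hsum
  omega

end Multigraph

theorem eulerian_partition_count_le_general
    {V E : Type*} [Fintype V] [DecidableEq V] [Fintype E]
    (ends : E → Sym2 V) (hloop : ∀ e, ¬ (ends e).IsDiag)
    (t : ℕ) (part : E → Fin t) (hsurj : Function.Surjective part)
    (heul : ∀ (j : Fin t) (v : V),
      Even ((Finset.univ.filter (fun e => part e = j ∧ v ∈ ends e)).card)) :
    (t : ℝ) ≤ (Fintype.card E : ℝ) / 2 -
      (((Finset.univ.filter (fun s : Sym2 V =>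
        Odd ((Finset.univ.filter (fun e => ends e = s)).card))).card : ℝ)) / 6 := by
  have key := six_mul_card_add_card_oddPairs_le part hsurj hloop fun j v => by
    simpa only [filter_filter] using heul j v
  rw [Fintype.card_fin] at key
  have key' : (6 * t + #(oddPairs ends univ) : ℝ) ≤ 3 * Fintype.card E := by exact_mod_cast key
  unfold oddPairs edgeMult at key'
  linarith

/-- If the edge multiset of a finite loopless multigraph (vertices `V`, edge indices `E`,
endpoints `ends`) is partitioned into `t` nonempty parts, each inducing a subgraph in which
every vertex has even degree, then `t ≤ |E|/2 − |E_⊕|/6`, where `E_⊕` is the number of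
vertex pairs joined by an odd number of parallel edges. -/
theorem eulerian_partition_count_le
    {V E : Type*} [Fintype V] [DecidableEq V] [Fintype E] [DecidableEq E]
    (ends : E → Sym2 V) (hloop : ∀ e, ¬ (ends e).IsDiag)
    (t : ℕ) (part : E → Fin t) (hsurj : Function.Surjective part)
    (heul : ∀ (j : Fin t) (v : V),
      Even ((Finset.univ.filter (fun e => part e = j ∧ v ∈ ends e)).card)) :
    (t : ℝ) ≤ (Fintype.card E : ℝ) / 2 -
      (((Finset.univ.filter (fun s : Sym2 V =>
        Odd ((Finset.univ.filter (fun e => ends e = s)).card))).card : ℝ)) / 6 :=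
  eulerian_partition_count_le_general ends hloop t part hsurj heul
end

section
/- Let pE be a degree-2D Boolean pseudoexpectation on variables x₁,…,x_n. Let q(x) = Σ_σ q̂_σ x^σ be a multilinear polynomial (each monomial x^σ = ∏_{i∈σ} x_i for a set σ ⊆ [n]) and let r be a polynomial with deg q + deg r ≤ D. Then pE[ q·r² ] ≤ ‖q̂‖₁ · pE[ r² ], where ‖q̂‖₁ = Σ_σ |q̂_σ|. -/
open MvPolynomial

/-!
Expanding `q` in monomials, it suffices to show `|pE[x^σ r²]| ≤ pE[r²]` whenever
`|σ| + deg r ≤ D`. Positivity of `pE[((1 ± x^σ) r)²]` gives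
`2 |pE[x^σ r²]| ≤ pE[r²] + pE[(x^σ)² r²]`, and the Boolean axioms, applied once per variable
of `σ`, turn `pE[(x^σ)² r²]` back into `pE[r²]`.
-/

namespace Finsupp

variable {ι : Type*}

theorem sum_sum_single_one (s : Finset ι) :
    ((∑ i ∈ s, single i 1 : ι →₀ ℕ).sum fun _ e => e) = s.card := by
  refine (card_toMultiset _).symm.trans ?_
  rw [toMultiset_sum_single, one_nsmul, Finset.card_val]

theorem sum_single_one_injective :
    Function.Injective fun s : Finset ι => (∑ i ∈ s, single i 1 : ι →₀ ℕ) := by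
  intro s t h
  have := congrArg toMultiset h
  simp only [toMultiset_sum_single, one_nsmul] at this
  exact Finset.val_injective this

end Finsupp

namespace MvPolynomial

variable {ι R : Type*} [CommSemiring R]

theorem prod_X_eq_monomial_sum_single (s : Finset ι) :
    (∏ i ∈ s, X i : MvPolynomial ι R) = monomial (∑ i ∈ s, Finsupp.single i 1) 1 :=
  (monomial_sum_one s _).symm

theorem totalDegree_prod_X_le (s : Finset ι) :
    (∏ i ∈ s, X i : MvPolynomial ι R).totalDegree ≤ s.card := by
  rw [prod_X_eq_monomial_sum_single, ← Finsupp.sum_sum_single_one]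
  exact totalDegree_monomial_le _ _

theorem coeff_sum_C_mul_prod_X [Fintype ι] (c : Finset ι → R) (s : Finset ι) :
    coeff (∑ i ∈ s, Finsupp.single i 1) (∑ t, C (c t) * ∏ i ∈ t, X i) = c s := by
  classical
  simp only [prod_X_eq_monomial_sum_single, C_mul_monomial, mul_one, coeff_sum, coeff_monomial,
    Finsupp.sum_single_one_injective.eq_iff, Finset.sum_ite_eq', Finset.mem_univ, if_true]

theorem card_le_totalDegree_sum_C_mul_prod_X [Fintype ι] {c : Finset ι → R} {s : Finset ι}
    (hs : c s ≠ 0) : s.card ≤ (∑ t, C (c t) * ∏ i ∈ t, X i).totalDegree := by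
  rw [← Finsupp.sum_sum_single_one]
  exact le_totalDegree (mem_support_iff.mpr ((coeff_sum_C_mul_prod_X c s).symm ▸ hs))

end MvPolynomial

section Pseudoexpectation

variable {ι : Type*} {D : ℕ} {pE : MvPolynomial ι ℝ →ₗ[ℝ] ℝ}

theorem two_mul_abs_map_mul_sq_le
    (hsos : ∀ p : MvPolynomial ι ℝ, p.totalDegree ≤ D → 0 ≤ pE (p ^ 2))
    {m r : MvPolynomial ι ℝ} (hd : m.totalDegree + r.totalDegree ≤ D) :
    2 * |pE (m * r ^ 2)| ≤ pE (r ^ 2) + pE (m ^ 2 * r ^ 2) := by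
  have hplus : 0 ≤ pE (((1 + m) * r) ^ 2) := by
    have : (1 + m).totalDegree ≤ m.totalDegree := (totalDegree_add 1 m).trans (by simp)
    exact hsos _ ((totalDegree_mul _ _).trans (by omega))
  have hminus : 0 ≤ pE (((1 - m) * r) ^ 2) := by
    have : (1 - m).totalDegree ≤ m.totalDegree := (totalDegree_sub 1 m).trans (by simp)
    exact hsos _ ((totalDegree_mul _ _).trans (by omega))
  have expand_plus : ((1 + m) * r) ^ 2 = r ^ 2 + m * r ^ 2 + m * r ^ 2 + m ^ 2 * r ^ 2 := by ring
  have expand_minus : ((1 - m) * r) ^ 2 = r ^ 2 - m * r ^ 2 - m * r ^ 2 + m ^ 2 * r ^ 2 := by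
    ring
  rw [expand_plus, map_add, map_add, map_add] at hplus
  rw [expand_minus, map_add, map_sub, map_sub] at hminus
  cases abs_cases (pE (m * r ^ 2)) <;> linarith

theorem map_sq_prod_X_mul
    (hbool : ∀ (i : ι) (q : MvPolynomial ι ℝ), q.totalDegree ≤ 2 * D - 2 →
      pE (X i ^ 2 * q) = pE q)
    (s : Finset ι) {p : MvPolynomial ι ℝ} (hd : p.totalDegree + 2 * s.card ≤ 2 * D) :
    pE ((∏ i ∈ s, X i) ^ 2 * p) = pE p := by
  classical
  induction s using Finset.induction_on generalizing p with
  | empty => simp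
  | insert a s ha ih =>
    rw [Finset.card_insert_of_notMem ha] at hd
    have hdeg : ((∏ i ∈ s, X i) ^ 2 * p).totalDegree ≤ 2 * D - 2 := by
      have := (totalDegree_pow (∏ i ∈ s, X i : MvPolynomial ι ℝ) 2).trans
        (Nat.mul_le_mul_left 2 (totalDegree_prod_X_le s))
      have := totalDegree_mul ((∏ i ∈ s, X i : MvPolynomial ι ℝ) ^ 2) p
      omega
    calc pE ((∏ i ∈ insert a s, X i) ^ 2 * p)
        = pE (X a ^ 2 * ((∏ i ∈ s, X i) ^ 2 * p)) := by rw [Finset.prod_insert ha]; ring_nf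
      _ = pE p := by rw [hbool a _ hdeg, ih (by omega)]

theorem abs_map_prod_X_mul_sq_le
    (hsos : ∀ p : MvPolynomial ι ℝ, p.totalDegree ≤ D → 0 ≤ pE (p ^ 2))
    (hbool : ∀ (i : ι) (q : MvPolynomial ι ℝ), q.totalDegree ≤ 2 * D - 2 →
      pE (X i ^ 2 * q) = pE q)
    (s : Finset ι) {r : MvPolynomial ι ℝ} (hd : s.card + r.totalDegree ≤ D) :
    |pE ((∏ i ∈ s, X i) * r ^ 2)| ≤ pE (r ^ 2) := by
  have hr := totalDegree_pow r 2
  have := two_mul_abs_map_mul_sq_le hsos ((Nat.add_le_add_right (totalDegree_prod_X_le s) _).trans hd)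
  rw [map_sq_prod_X_mul hbool s (by omega)] at this
  linarith

end Pseudoexpectation

theorem pseudoexpectation_l1_bound_general
    (n D : ℕ) (pE : MvPolynomial (Fin n) ℝ →ₗ[ℝ] ℝ)
    (hsos : ∀ p : MvPolynomial (Fin n) ℝ, p.totalDegree ≤ D → 0 ≤ pE (p ^ 2))
    (hbool : ∀ (i : Fin n) (q : MvPolynomial (Fin n) ℝ), q.totalDegree ≤ 2 * D - 2 →
      pE (MvPolynomial.X i ^ 2 * q) = pE q)
    (qhat : Finset (Fin n) → ℝ)
    (q r : MvPolynomial (Fin n) ℝ)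
    (hq : q = ∑ σ : Finset (Fin n), MvPolynomial.C (qhat σ) * ∏ i ∈ σ, MvPolynomial.X i)
    (hdeg : q.totalDegree + r.totalDegree ≤ D) :
    pE (q * r ^ 2) ≤ (∑ σ : Finset (Fin n), |qhat σ|) * pE (r ^ 2) := by
  subst hq
  rw [Finset.sum_mul, map_sum, Finset.sum_mul]
  refine Finset.sum_le_sum fun σ _ => ?_
  rw [mul_assoc, ← smul_eq_C_mul, map_smul, smul_eq_mul]
  by_cases hσ : qhat σ = 0
  · simp [hσ]
  have hcard := card_le_totalDegree_sum_C_mul_prod_X hσ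
  calc qhat σ * pE ((∏ i ∈ σ, X i) * r ^ 2)
      ≤ |qhat σ| * |pE ((∏ i ∈ σ, X i) * r ^ 2)| := by rw [← abs_mul]; exact le_abs_self _
    _ ≤ |qhat σ| * pE (r ^ 2) := by
      gcongr
      exact abs_map_prod_X_mul_sq_le hsos hbool σ (by omega)

/-- If `pE` is a degree-`2D` Boolean pseudoexpectation, `q` is a multilinear polynomial with
coefficients `q̂`, and `deg q + deg r ≤ D`, then `pE[q·r²] ≤ ‖q̂‖₁ · pE[r²]`. -/
theorem pseudoexpectation_l1_bound
    (n D : ℕ) (pE : MvPolynomial (Fin n) ℝ →ₗ[ℝ] ℝ)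
    (hone : pE 1 = 1)
    (hsos : ∀ p : MvPolynomial (Fin n) ℝ, p.totalDegree ≤ D → 0 ≤ pE (p ^ 2))
    (hbool : ∀ (i : Fin n) (q : MvPolynomial (Fin n) ℝ), q.totalDegree ≤ 2 * D - 2 →
      pE (MvPolynomial.X i ^ 2 * q) = pE q)
    (qhat : Finset (Fin n) → ℝ)
    (q r : MvPolynomial (Fin n) ℝ)
    (hq : q = ∑ σ : Finset (Fin n), MvPolynomial.C (qhat σ) * ∏ i ∈ σ, MvPolynomial.X i)
    (hdeg : q.totalDegree + r.totalDegree ≤ D) :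
    pE (q * r ^ 2) ≤ (∑ σ : Finset (Fin n), |qhat σ|) * pE (r ^ 2) :=
  pseudoexpectation_l1_bound_general n D pE hsos hbool qhat q r hq hdeg
end

section
/- Let k be even, let d ≥ 2 be an even integer, let α > 0, and let T be an order-k tensor on [n] with natural n^{k/2} × n^{k/2} flattening T_flat. Let pE be a linear functional on real polynomials in x₁,…,x_n of degree at most dk such that pE[1] = 1, pE[p²] ≥ 0 for every polynomial p of degree at most dk/2, and pE[ (Σ_{i∈[n]} x_i² − α) · q ] = 0 for every polynomial q of degree at most dk − 2. Then | pE[ ⟨T, x^{⊗k}⟩ ] | ≤ α^{k/2} · ( ‖ E_{Π,Σ∈Ŝ_{dk/2}}[ Π (T_flat)^{⊗d} Σ ] ‖ )^{1/d}. -/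
/-!
Write `P = ⟨T, x^{⊗k}⟩` as the quadratic form `mᵀ T_flat m` in the degree-`k/2` monomial vector
`m = x^{⊗k/2}`; then `P^d = m_dᵀ T_flat^{⊗d} m_d` with `m_d = x^{⊗dk/2}`, so
`pE[P^d] = ⟨T_flat^{⊗d}, G⟩` for the moment matrix `G_IJ = pE[m_I m_J]`. Cauchy–Schwarz for `pE`
makes `j ↦ pE[P^{2j}]` log-convex, whence `pE[P]^d ≤ pE[P^d]`. The matrix `G` is positive
semidefinite and invariant under permuting the positions of `I` and of `J`, so `T_flat^{⊗d}` may be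
replaced by its symmetrisation `N`, and `⟨N, G⟩ ≤ ‖N‖ tr G = ‖N‖ pE[‖x‖^{dk}] = ‖N‖ α^{dk/2}`.
-/

open MeasureTheory Matrix MvPolynomial

theorem pow_le_of_sq_le_mul {g : ℕ → ℝ} {m : ℕ} (h0 : g 0 = 1) (hnonneg : ∀ j ≤ m, 0 ≤ g j)
    (hlog : ∀ j, j + 2 ≤ m → g (j + 1) ^ 2 ≤ g j * g (j + 2)) : g 1 ^ m ≤ g m := by
  have hstep : ∀ j, j + 1 ≤ m → g 1 * g j ≤ g (j + 1) := by
    intro j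
    induction j with
    | zero => intro _; rw [h0, mul_one]
    | succ j ih =>
      intro hj
      have hprev := ih (by omega)
      have hlc := hlog j hj
      have hj1 := hnonneg (j + 1) (by omega)
      have hj2 := hnonneg (j + 2) hj
      rcases (hnonneg j (by omega)).eq_or_lt with hzero | hpos
      · have : g (j + 1) = 0 := by nlinarith
        rw [this, mul_zero]
        exact hj2
      · -- `g 1 * g (j + 1) * g j ≤ g (j + 1) ^ 2 ≤ g j * g (j + 2)`, then cancel `g j > 0`
        refine le_of_mul_le_mul_right ?_ hpos
        nlinarith
  suffices ∀ j ≤ m, g 1 ^ j ≤ g j from this m le_rfl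
  intro j hj
  induction j with
  | zero => rw [pow_zero, h0]
  | succ j ih =>
    calc g 1 ^ (j + 1) = g 1 * g 1 ^ j := pow_succ' _ _
      _ ≤ g 1 * g j := mul_le_mul_of_nonneg_left (ih (by omega)) (hnonneg 1 (by omega))
      _ ≤ g (j + 1) := hstep j hj

section PseudoExpectation

variable {σ : Type*} (L : MvPolynomial σ ℝ →ₗ[ℝ] ℝ) {D : ℕ}

theorem sq_map_mul_le_of_sos
    (hsos : ∀ p : MvPolynomial σ ℝ, p.totalDegree ≤ D → 0 ≤ L (p ^ 2))
    {p q : MvPolynomial σ ℝ} (hp : p.totalDegree ≤ D) (hq : q.totalDegree ≤ D) :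
    L (p * q) ^ 2 ≤ L (p ^ 2) * L (q ^ 2) := by
  have hquad : ∀ t : ℝ, 0 ≤ L (p ^ 2) * (t * t) + 2 * L (p * q) * t + L (q ^ 2) := by
    intro t
    have hdeg : (t • p + q).totalDegree ≤ D :=
      (totalDegree_add _ _).trans (max_le ((totalDegree_smul_le t p).trans hp) hq)
    have hexpand : (t • p + q) ^ 2 = (t * t) • p ^ 2 + (2 * t) • (p * q) + q ^ 2 := by
      simp only [smul_eq_C_mul, map_mul, map_ofNat]
      ring
    have h := hsos _ hdeg
    rw [hexpand, map_add, map_add, map_smul, map_smul, smul_eq_mul, smul_eq_mul] at h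
    linarith
  have hdisc := discrim_le_zero hquad
  rw [discrim] at hdisc
  nlinarith

theorem map_pow_le_map_pow_of_sos (hone : L 1 = 1)
    (hsos : ∀ p : MvPolynomial σ ℝ, p.totalDegree ≤ D → 0 ≤ L (p ^ 2))
    {P : MvPolynomial σ ℝ} {m : ℕ} (hdeg : m * P.totalDegree ≤ D) :
    L P ^ (2 * m) ≤ L (P ^ (2 * m)) := by
  have hdegj : ∀ j ≤ m, (P ^ j).totalDegree ≤ D := fun j hj =>
    (totalDegree_pow P j).trans ((Nat.mul_le_mul_right _ hj).trans hdeg)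
  have hsq : ∀ j, P ^ (2 * j) = (P ^ j) ^ 2 := fun j => by rw [← pow_mul, mul_comm]
  rcases Nat.eq_zero_or_pos m with rfl | hm
  · simp [hone]
  have hP2 : L P ^ 2 ≤ L (P ^ 2) := by
    simpa [hone] using sq_map_mul_le_of_sos L hsos (hdegj 1 hm) (q := 1) (by simp)
  have hlog : ∀ j, j + 2 ≤ m →
      L (P ^ (2 * (j + 1))) ^ 2 ≤ L (P ^ (2 * j)) * L (P ^ (2 * (j + 2))) := by
    intro j hj
    have hprod : P ^ (2 * (j + 1)) = P ^ j * P ^ (j + 2) := by rw [← pow_add]; ring_nf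
    rw [hprod, hsq, hsq]
    exact sq_map_mul_le_of_sos L hsos (hdegj j (by omega)) (hdegj (j + 2) hj)
  calc L P ^ (2 * m) = (L P ^ 2) ^ m := pow_mul _ _ _
    _ ≤ L (P ^ 2) ^ m := pow_le_pow_left₀ (sq_nonneg _) hP2 m
    _ ≤ L (P ^ (2 * m)) := pow_le_of_sq_le_mul (g := fun j => L (P ^ (2 * j)))
        (by simp [hone]) (fun j hj => hsq j ▸ hsos _ (hdegj j hj)) hlog

theorem map_sumSq_pow_of_sphere [Fintype σ] (hone : L 1 = 1) {α : ℝ}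
    (hsphere : ∀ q : MvPolynomial σ ℝ, q.totalDegree ≤ D - 2 →
      L (((∑ i, X i ^ 2) - C α) * q) = 0) {j : ℕ} (hj : 2 * j ≤ D) :
    L ((∑ i, X i ^ 2) ^ j) = α ^ j := by
  set S : MvPolynomial σ ℝ := ∑ i, X i ^ 2
  have hS : S.totalDegree ≤ 2 :=
    (totalDegree_finsetSum _ _).trans <| Finset.sup_le fun i _ =>
      (totalDegree_pow _ _).trans (by rw [totalDegree_X])
  induction j with
  | zero => simpa using hone
  | succ j ih =>
    have hq : (S ^ j).totalDegree ≤ D - 2 :=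
      (totalDegree_pow _ _).trans ((Nat.mul_le_mul_left j hS).trans (by omega))
    have hsplit : S ^ (j + 1) = (S - C α) * S ^ j + α • S ^ j := by
      rw [smul_eq_C_mul]; ring
    rw [hsplit, map_add, map_smul, hsphere _ hq, ih (by omega), smul_eq_mul, pow_succ]
    ring

end PseudoExpectation

section SpectralNorm

variable {ι : Type*} [Fintype ι] [DecidableEq ι]

theorem dotProduct_mulVec_le_sNorm_mul (N : Matrix ι ι ℝ) (u : ι → ℝ) :
    u ⬝ᵥ N *ᵥ u ≤ sNorm N * (u ⬝ᵥ u) := by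
  set v : EuclideanSpace ℝ ι := WithLp.toLp 2 u
  set f := Matrix.toEuclideanCLM (𝕜 := ℝ) N
  have hv : ‖v‖ ^ 2 = u ⬝ᵥ u := by
    rw [EuclideanSpace.norm_sq_eq]
    simp [v, dotProduct, sq]
  calc u ⬝ᵥ N *ᵥ u = inner ℝ v (f v) := (Matrix.inner_toEuclideanCLM N v v).symm
    _ ≤ ‖v‖ * ‖f v‖ := real_inner_le_norm v (f v)
    _ ≤ ‖v‖ * (‖f‖ * ‖v‖) := mul_le_mul_of_nonneg_left (f.le_opNorm v) (norm_nonneg v)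
    _ = sNorm N * (u ⬝ᵥ u) := by rw [← hv, sNorm]; ring

open scoped MatrixOrder in
theorem sum_mul_le_sNorm_mul_trace (N G : Matrix ι ι ℝ) (hG : G.PosSemidef) :
    ∑ I, ∑ J, N I J * G I J ≤ sNorm N * G.trace := by
  obtain ⟨B, rfl⟩ := CStarAlgebra.nonneg_iff_eq_star_mul_self.mp hG.nonneg
  have hsum : ∑ I, ∑ J, N I J * (star B * B) I J = ∑ K, B K ⬝ᵥ N *ᵥ B K := by
    simp only [Matrix.mul_apply, Matrix.star_apply, star_trivial, dotProduct, Matrix.mulVec,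
      Finset.mul_sum]
    refine (Finset.sum_congr rfl fun I _ => Finset.sum_comm).trans (Finset.sum_comm.trans ?_)
    exact Finset.sum_congr rfl fun K _ => Finset.sum_congr rfl fun I _ =>
      Finset.sum_congr rfl fun J _ => by ring
  have htrace : (star B * B).trace = ∑ K, B K ⬝ᵥ B K := by
    simp only [Matrix.trace, Matrix.diag, Matrix.mul_apply, Matrix.star_apply, star_trivial,
      dotProduct]
    exact Finset.sum_comm
  rw [hsum, htrace, Finset.mul_sum]
  exact Finset.sum_le_sum fun K _ => dotProduct_mulVec_le_sNorm_mul N (B K)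

end SpectralNorm

theorem sum_symAvg_mul_of_perm_invariant {ι τ : Type*} [Fintype ι] [DecidableEq ι] [Fintype τ]
    (A W : Matrix (ι → τ) (ι → τ) ℝ)
    (hW : ∀ (π σ : Equiv.Perm ι) (I J : ι → τ), W (I ∘ π) (J ∘ σ) = W I J) :
    ∑ I, ∑ J, symAvg A I J * W I J = ∑ I, ∑ J, A I J * W I J := by
  have hshift : ∀ π σ : Equiv.Perm ι,
      ∑ I, ∑ J, A (I ∘ π) (J ∘ σ) * W I J = ∑ I, ∑ J, A I J * W I J := by
    intro π σ
    exact Fintype.sum_equiv (π.symm.arrowCongr (Equiv.refl τ)) _ _ fun I =>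
      Fintype.sum_equiv (σ.symm.arrowCongr (Equiv.refl τ)) _ _ fun J => by
        show _ = A (I ∘ π) (J ∘ σ) * W (I ∘ π) (J ∘ σ)
        rw [hW]
  have hc : (Fintype.card (Equiv.Perm ι) : ℝ) ≠ 0 := Nat.cast_ne_zero.mpr Fintype.card_ne_zero
  calc ∑ I, ∑ J, symAvg A I J * W I J
      = (∑ π : Equiv.Perm ι, ∑ σ : Equiv.Perm ι, ∑ I, ∑ J, A (I ∘ π) (J ∘ σ) * W I J) /
          (Fintype.card (Equiv.Perm ι) : ℝ) ^ 2 := by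
        simp only [symAvg, div_mul_eq_mul_div, Finset.sum_mul, ← Finset.sum_div]
        congr 1
        exact (Finset.sum_congr rfl fun I _ => Finset.sum_comm).trans <| Finset.sum_comm.trans <|
          Finset.sum_congr rfl fun π _ =>
            (Finset.sum_congr rfl fun I _ => Finset.sum_comm).trans Finset.sum_comm
    _ = ∑ I, ∑ J, A I J * W I J := by
        simp only [hshift, Finset.sum_const, Finset.card_univ, nsmul_eq_mul]
        field_simp

section TupleMonomial

variable {ι σ R : Type*} [Fintype ι] [CommSemiring R]

noncomputable def tupleMonomial (I : ι → σ) : MvPolynomial σ R :=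
  ∏ p, X (I p)

theorem totalDegree_tupleMonomial_le (I : ι → σ) :
    (tupleMonomial I : MvPolynomial σ R).totalDegree ≤ Fintype.card ι :=
  (totalDegree_finsetProd _ _).trans <| (Finset.sum_le_card_nsmul _ _ 1 fun p _ =>
    (totalDegree_monomial_le _ _).trans_eq (by simp)).trans_eq (by simp)

theorem tupleMonomial_comp_perm (I : ι → σ) (π : Equiv.Perm ι) :
    (tupleMonomial (I ∘ π) : MvPolynomial σ R) = tupleMonomial I :=
  Equiv.prod_comp π fun p => X (I p)

theorem tupleMonomial_uncurry {κ : Type*} [Fintype κ] (I : ι × κ → σ) :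
    (tupleMonomial I : MvPolynomial σ R) = ∏ t, tupleMonomial fun s => I (t, s) :=
  Fintype.prod_prod_type _

theorem sum_tupleMonomial_mul_self [DecidableEq ι] [Fintype σ] :
    ∑ I : ι → σ, (tupleMonomial I * tupleMonomial I : MvPolynomial σ R) =
      (∑ i, X i ^ 2) ^ Fintype.card ι := by
  rw [← Finset.card_univ, ← Finset.prod_const, Fintype.prod_sum]
  refine Finset.sum_congr rfl fun I _ => ?_
  rw [tupleMonomial, ← Finset.prod_mul_distrib]
  simp only [sq]

theorem tupleMonomial_joinIdx {n k κ : ℕ} (hk : k = 2 * κ) (a b : Fin κ → Fin n) :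
    (tupleMonomial (joinIdx hk a b) : MvPolynomial (Fin n) R) =
      tupleMonomial a * tupleMonomial b := by
  have hcast : κ + κ = k := by omega
  rw [tupleMonomial,
    ← (finCongr hcast).prod_comp fun j => (X (joinIdx hk a b j) : MvPolynomial (Fin n) R),
    Fin.prod_univ_add]
  congr 1 <;> refine Finset.prod_congr rfl fun s _ => ?_ <;> simp [joinIdx]

end TupleMonomial

def joinIdxEquiv {n k κ : ℕ} (hk : k = 2 * κ) :
    (Fin κ → Fin n) × (Fin κ → Fin n) ≃ (Fin k → Fin n) where
  toFun ab := joinIdx hk ab.1 ab.2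
  invFun i := (fun s => i ⟨s, by omega⟩, fun s => i ⟨κ + s, by omega⟩)
  left_inv ab := by
    ext s <;> simp [joinIdx]
  right_inv i := by
    funext j
    by_cases h : (j : ℕ) < κ
    · simp [joinIdx, h]
    · simp only [joinIdx, h, ↓reduceDIte]
      congr
      omega

noncomputable def tupleQuadForm {ι σ : Type*} [Fintype ι] [DecidableEq ι] [Fintype σ]
    (M : Matrix (ι → σ) (ι → σ) ℝ) : MvPolynomial σ ℝ :=
  ∑ a, ∑ b, C (M a b) * (tupleMonomial a * tupleMonomial b)

theorem sum_C_mul_prod_X_eq_tupleQuadForm_flatten {n k κ : ℕ} (hk : k = 2 * κ)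
    (T : (Fin k → Fin n) → ℝ) :
    ∑ i, C (T i) * ∏ j, X (i j) = tupleQuadForm (flatten hk T) := by
  rw [tupleQuadForm, ← Fintype.sum_prod_type', ← (joinIdxEquiv hk).sum_comp]
  refine Finset.sum_congr rfl fun ab _ => ?_
  rw [← tupleMonomial_joinIdx hk]
  rfl

theorem tupleQuadForm_pow {n κ : ℕ} (M : Matrix (Fin κ → Fin n) (Fin κ → Fin n) ℝ) (d : ℕ) :
    tupleQuadForm M ^ d = tupleQuadForm (kronFlat d M) := by
  let e : (Fin d → (Fin κ → Fin n) × (Fin κ → Fin n)) ≃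
      ((Fin d × Fin κ → Fin n) × (Fin d × Fin κ → Fin n)) :=
    (Equiv.arrowProdEquivProdArrow _ _ _).trans
      ((Equiv.curry _ _ _).symm.prodCongr (Equiv.curry _ _ _).symm)
  rw [← Fin.prod_const, tupleQuadForm, tupleQuadForm, ← Fintype.sum_prod_type',
    ← Fintype.sum_prod_type', Fintype.prod_sum]
  refine Fintype.sum_equiv e _ _ fun p => ?_
  rw [Finset.prod_mul_distrib, Finset.prod_mul_distrib, ← map_prod, tupleMonomial_uncurry,
    tupleMonomial_uncurry]
  rfl

theorem totalDegree_tupleQuadForm_le {ι σ : Type*} [Fintype ι] [DecidableEq ι] [Fintype σ]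
    (M : Matrix (ι → σ) (ι → σ) ℝ) :
    (tupleQuadForm M).totalDegree ≤ 2 * Fintype.card ι := by
  refine (totalDegree_finsetSum _ _).trans <| Finset.sup_le fun a _ =>
    (totalDegree_finsetSum _ _).trans <| Finset.sup_le fun b _ => ?_
  refine (totalDegree_mul _ _).trans ?_
  rw [totalDegree_C, zero_add, two_mul]
  exact (totalDegree_mul _ _).trans
    (add_le_add (totalDegree_tupleMonomial_le a) (totalDegree_tupleMonomial_le b))

section MomentMatrix

variable {σ : Type*} (L : MvPolynomial σ ℝ →ₗ[ℝ] ℝ) (ι : Type*) [Fintype ι]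

noncomputable def momentMatrix : Matrix (ι → σ) (ι → σ) ℝ :=
  Matrix.of fun I J => L (tupleMonomial I * tupleMonomial J)

theorem map_tupleQuadForm [Fintype σ] [DecidableEq ι] (M : Matrix (ι → σ) (ι → σ) ℝ) :
    L (tupleQuadForm M) = ∑ I, ∑ J, M I J * momentMatrix L ι I J := by
  simp only [tupleQuadForm, map_sum, ← smul_eq_C_mul, map_smul, smul_eq_mul]
  rfl

theorem momentMatrix_comp_perm (π π' : Equiv.Perm ι) (I J : ι → σ) :
    momentMatrix L ι (I ∘ π) (J ∘ π') = momentMatrix L ι I J := by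
  simp only [momentMatrix, Matrix.of_apply, tupleMonomial_comp_perm]

theorem trace_momentMatrix [Fintype σ] [DecidableEq ι] :
    (momentMatrix L ι).trace = L ((∑ i, X i ^ 2) ^ Fintype.card ι) := by
  rw [← sum_tupleMonomial_mul_self, map_sum]
  rfl

theorem momentMatrix_posSemidef [Fintype σ] [DecidableEq ι] {D : ℕ}
    (hsos : ∀ p : MvPolynomial σ ℝ, p.totalDegree ≤ D → 0 ≤ L (p ^ 2))
    (hι : Fintype.card ι ≤ D) : (momentMatrix L ι).PosSemidef := by
  refine Matrix.PosSemidef.of_dotProduct_mulVec_nonneg ?_ fun x => ?_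
  · ext I J
    simp only [momentMatrix, Matrix.conjTranspose_apply, Matrix.of_apply, star_trivial, mul_comm]
  · have hdeg : (∑ I, x I • tupleMonomial I : MvPolynomial σ ℝ).totalDegree ≤ D :=
      (totalDegree_finsetSum _ _).trans <| Finset.sup_le fun I _ =>
        (totalDegree_smul_le _ _).trans ((totalDegree_tupleMonomial_le I).trans hι)
    refine (hsos _ hdeg).trans_eq ?_
    rw [sq, Finset.sum_mul_sum, map_sum]
    simp only [dotProduct, Matrix.mulVec, star_trivial, Finset.mul_sum, map_sum]
    refine Finset.sum_congr rfl fun I _ => Finset.sum_congr rfl fun J _ => ?_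
    rw [smul_mul_smul_comm, map_smul, smul_eq_mul, momentMatrix, Matrix.of_apply]
    ring

end MomentMatrix

theorem abs_le_mul_rpow_of_abs_pow_le {x a B : ℝ} {d : ℕ} (hd : d ≠ 0) (ha : 0 ≤ a)
    (hB : 0 ≤ B) (h : |x| ^ d ≤ B * a ^ d) : |x| ≤ a * B ^ (1 / (d : ℝ)) := by
  have hpow : (a * B ^ (1 / (d : ℝ))) ^ d = B * a ^ d := by
    rw [mul_pow, one_div, Real.rpow_inv_natCast_pow hB hd, mul_comm]
  exact (pow_le_pow_iff_left₀ (abs_nonneg x) (by positivity) hd).mp (h.trans_eq hpow.symm)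

/-- Degree-`dk` SoS bound on the pseudoexpectation of `⟨T, x^{⊗k}⟩` under the sphere
constraint `Σ xᵢ² = α`: it is at most `α^{k/2}` times the `d`-th root of the spectral norm of
the permutation-averaged `d`-th Kronecker power of the natural flattening of `T`. -/
theorem sos_tensor_norm_bound
    (n k κ d : ℕ) (hk : k = 2 * κ)
    (hd : 2 ≤ d) (hdEven : Even d)
    (α : ℝ) (hα : 0 < α)
    (T : (Fin k → Fin n) → ℝ)
    (pE : MvPolynomial (Fin n) ℝ →ₗ[ℝ] ℝ)
    (hone : pE 1 = 1)
    (hsos : ∀ p : MvPolynomial (Fin n) ℝ, p.totalDegree ≤ d * κ → 0 ≤ pE (p ^ 2))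
    (hsphere : ∀ q : MvPolynomial (Fin n) ℝ, q.totalDegree ≤ d * k - 2 →
      pE (((∑ i : Fin n, MvPolynomial.X i ^ 2) - MvPolynomial.C α) * q) = 0) :
    |pE (∑ i : Fin k → Fin n, MvPolynomial.C (T i) * ∏ j : Fin k, MvPolynomial.X (i j))|
      ≤ α ^ κ * (sNorm (symAvg (kronFlat d (flatten hk T)))) ^ (1 / (d : ℝ)) := by
  obtain ⟨m, rfl⟩ := hdEven
  rw [sum_C_mul_prod_X_eq_tupleQuadForm_flatten hk T]
  set P := tupleQuadForm (flatten hk T)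
  set A := kronFlat (m + m) (flatten hk T)
  set G := momentMatrix pE (Fin (m + m) × Fin κ)
  have hcard : Fintype.card (Fin (m + m) × Fin κ) = (m + m) * κ := by simp
  have hdeg : m * P.totalDegree ≤ (m + m) * κ :=
    (Nat.mul_le_mul_left m (by simpa using totalDegree_tupleQuadForm_le (flatten hk T))).trans_eq
      (by ring)
  have hpow : |pE P| ^ (m + m) ≤ sNorm (symAvg A) * (α ^ κ) ^ (m + m) :=
    calc |pE P| ^ (m + m) = pE P ^ (2 * m) := by rw [Even.pow_abs ⟨m, rfl⟩, two_mul]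
      _ ≤ pE (P ^ (2 * m)) := map_pow_le_map_pow_of_sos pE hone hsos hdeg
      _ = ∑ I, ∑ J, A I J * G I J := by rw [two_mul, tupleQuadForm_pow, map_tupleQuadForm]
      _ = ∑ I, ∑ J, symAvg A I J * G I J :=
        (sum_symAvg_mul_of_perm_invariant _ _ (momentMatrix_comp_perm pE _)).symm
      _ ≤ sNorm (symAvg A) * G.trace :=
        sum_mul_le_sNorm_mul_trace _ _ (momentMatrix_posSemidef pE _ hsos hcard.le)
      _ = sNorm (symAvg A) * (α ^ κ) ^ (m + m) := by
        rw [trace_momentMatrix, hcard, ← pow_mul, mul_comm κ,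
          map_sumSq_pow_of_sphere pE hone hsphere (le_of_eq (by rw [hk]; ring))]
  exact abs_le_mul_rpow_of_abs_pow_le (by omega) (pow_nonneg hα.le κ) (norm_nonneg _) hpow
end
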